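/- arXiv:2007.09556 — 5 statements merged into one kernel-verified Lean document; each statement's English description precedes it below -/
import Mathlib

section
/- For any lattice $\mathcal{L} \subset \mathbb{R}^n$ and $\epsilon \in (0,1/2)$, $\overline{\eta}_\epsilon(\mathcal{L}) \le \sqrt{\log_2(1/\epsilon)} \cdot \lambda_1(\mathcal{L})$, where $\overline{\eta}_\epsilon(\mathcal{L}) = \min_{\mathcal{L}' \subseteq \mathcal{L}} \eta_\epsilon(\mathcal{L}')$ over nonzero sublattices $\mathcal{L}'$. -/
open scoped BigOperators RealInnerProductSpace

noncomputable section

abbrev Euc (n : ℕ) := EuclideanSpace ℝ (Fin n)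

def gaussianMass {n : ℕ} (s : ℝ) (A : Set (Euc n)) : ℝ :=
  ∑' x : A, Real.exp (-Real.pi * ‖(x : Euc n)‖ ^ 2 / s ^ 2)

def dualLattice {n : ℕ} (L : Set (Euc n)) : Set (Euc n) :=
  {x | x ∈ Submodule.span ℝ L ∧ (∀ y ∈ L, ∃ k : ℤ, ⟪x, y⟫ = (k : ℝ))}

def eta {n : ℕ} (ε : ℝ) (L : Set (Euc n)) : ℝ :=
  sInf {s : ℝ | 0 < s ∧ gaussianMass (1 / s) (dualLattice L \ {0}) ≤ ε}

def etaBar {n : ℕ} (ε : ℝ) (L : Submodule ℤ (Euc n)) : ℝ :=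
  sInf {t : ℝ | ∃ L' : Submodule ℤ (Euc n), L' ≤ L ∧ L' ≠ ⊥ ∧ t = eta ε (L' : Set (Euc n))}

def lambdaOne {n : ℕ} (L : Set (Euc n)) : ℝ :=
  sInf {r : ℝ | ∃ x ∈ L, x ≠ 0 ∧ ‖x‖ = r}

def succMin {n : ℕ} (L : Set (Euc n)) (k : ℕ) : ℝ :=
  sInf {r : ℝ | 0 ≤ r ∧ k ≤ Module.finrank ℝ (Submodule.span ℝ {y ∈ L | ‖y‖ ≤ r})}

namespace EtaHelper

open Real

variable {n : ℕ}

lemma mem_span_int_singleton {v x : Euc n} :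
    x ∈ (Submodule.span ℤ ({v} : Set (Euc n)) : Set (Euc n)) ↔ ∃ a : ℤ, ((a : ℝ)) • v = x := by
  rw [SetLike.mem_coe, Submodule.mem_span_singleton]
  constructor
  · rintro ⟨a, rfl⟩; exact ⟨a, Int.cast_smul_eq_zsmul ℝ a v⟩
  · rintro ⟨a, rfl⟩; exact ⟨a, (Int.cast_smul_eq_zsmul ℝ a v).symm⟩

lemma dual_diff_zero (v : Euc n) (hv : v ≠ 0) :
    dualLattice ((Submodule.span ℤ ({v} : Set (Euc n))) : Set (Euc n)) \ {0}
      = (fun k : ℤ => ((k : ℝ) / ‖v‖ ^ 2) • v) '' {k : ℤ | k ≠ 0} := by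
  have hQ : (‖v‖ : ℝ) ^ 2 ≠ 0 := pow_ne_zero 2 (norm_ne_zero_iff.2 hv)
  ext x
  simp only [Set.mem_diff, Set.mem_singleton_iff, Set.mem_image, Set.mem_setOf_eq,
    dualLattice, Set.mem_setOf_eq]
  constructor
  · rintro ⟨⟨hx1, hx2⟩, hx0⟩
    have hsub : Submodule.span ℝ ((Submodule.span ℤ ({v} : Set (Euc n))) : Set (Euc n))
        ≤ Submodule.span ℝ ({v} : Set (Euc n)) := by
      rw [Submodule.span_le]
      intro y hy
      rcases mem_span_int_singleton.1 hy with ⟨a, rfl⟩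
      exact Submodule.smul_mem _ _ (Submodule.mem_span_singleton_self v)
    rcases Submodule.mem_span_singleton.1 (hsub hx1) with ⟨t, rfl⟩
    obtain ⟨k, hk⟩ := hx2 v (Submodule.subset_span (Set.mem_singleton v))
    rw [real_inner_smul_left, real_inner_self_eq_norm_sq] at hk
    have hk0 : k ≠ 0 := by
      rintro rfl
      apply hx0
      have ht : t = 0 := by
        simp only [Int.cast_zero] at hk
        rcases mul_eq_zero.1 hk with h | h
        · exact h
        · exact absurd h hQ
      rw [ht, zero_smul]
    refine ⟨k, hk0, ?_⟩
    have ht : (k : ℝ) / ‖v‖ ^ 2 = t := by field_simp [hk]; rw [← hk]; ring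
    simp only [ht]
  · rintro ⟨k, hk0, rfl⟩
    have hkQ : (k : ℝ) / ‖v‖ ^ 2 ≠ 0 := div_ne_zero (Int.cast_ne_zero.2 hk0) hQ
    refine ⟨⟨?_, ?_⟩, smul_ne_zero hkQ hv⟩
    · exact Submodule.smul_mem _ _
        (Submodule.subset_span (by exact Submodule.mem_span_singleton_self v))
    · intro y hy
      rcases mem_span_int_singleton.1 hy with ⟨a, rfl⟩
      refine ⟨k * a, ?_⟩
      rw [real_inner_smul_left, real_inner_smul_right, real_inner_self_eq_norm_sq]
      push_cast
      field_simp

def iota : ℤ → ℕ := fun k => if 0 < k then (2 * k - 2).toNat else (2 * (-k) - 1).toNat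

lemma iota_inj : Function.Injective (fun k : {k : ℤ // k ≠ 0} => iota k.1) := by
  rintro ⟨a, ha⟩ ⟨b, hb⟩ h
  simp only [iota] at h
  apply Subtype.ext
  show a = b
  split_ifs at h <;> omega

lemma iota_bound (k : ℤ) (hk : k ≠ 0) : (iota k : ℤ) + 1 ≤ 2 * k ^ 2 := by
  have hsq : k ^ 2 = k * k := sq k
  simp only [iota]
  split_ifs with h
  · have h2 : ((2 * k - 2).toNat : ℤ) = 2 * k - 2 := Int.toNat_of_nonneg (by omega)
    rw [h2, hsq]; nlinarith
  · have hneg : k ≤ -1 := by omega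
    have h2 : ((2 * (-k) - 1).toNat : ℤ) = 2 * (-k) - 1 := Int.toNat_of_nonneg (by omega)
    rw [h2, hsq]; nlinarith

lemma mass_le (v : Euc n) (hv : v ≠ 0) (ε : ℝ) (hε : 0 < ε) (hε2 : ε < 1/2) :
    gaussianMass (1 / (Real.sqrt (Real.logb 2 (1/ε)) * ‖v‖))
      (dualLattice ((Submodule.span ℤ ({v} : Set (Euc n))) : Set (Euc n)) \ {0}) ≤ ε := by
  have hvn : (0 : ℝ) < ‖v‖ := norm_pos_iff.2 hv
  have hQ : (‖v‖ : ℝ) ^ 2 ≠ 0 := pow_ne_zero 2 hvn.ne'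
  have hε1 : ε < 1 := by linarith
  have hl : 0 < Real.log (1/ε) := Real.log_pos (by rw [lt_div_iff₀ hε]; linarith)
  have hlog2 : 0 < Real.log 2 := Real.log_pos one_lt_two
  have hc2 : 0 < Real.logb 2 (1/ε) := div_pos hl hlog2
  set c2 := Real.logb 2 (1/ε) with hc2def
  set P := Real.pi * c2 with hP
  have hPpos : 0 < P := mul_pos Real.pi_pos hc2
  set r := Real.exp (-(P/2)) with hr
  have hr0 : 0 < r := Real.exp_pos _
  have hrle : r ≤ ε ^ 2 := by
    have hπ : 4 * Real.log 2 < Real.pi := by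
      nlinarith [Real.pi_gt_three, Real.log_two_lt_d9]
    have hkey : 2 * Real.log (1/ε) ≤ P / 2 := by
      have hdiv : P / 2 = Real.pi * Real.log (1/ε) / (2 * Real.log 2) := by
        rw [hP, hc2def, Real.logb]; ring
      rw [hdiv, le_div_iff₀ (by positivity)]
      nlinarith [mul_le_mul_of_nonneg_right hπ.le hl.le]
    have h1 : r ≤ Real.exp (-(2 * Real.log (1/ε))) := by
      apply Real.exp_le_exp.2; linarith
    have h2 : Real.exp (-(2 * Real.log (1/ε))) = ε ^ 2 := by
      rw [one_div, Real.log_inv]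
      have h3 : -(2 * -Real.log ε) = (2 : ℕ) * Real.log ε := by push_cast; ring
      rw [h3, Real.exp_nat_mul, Real.exp_log hε]
    exact h2 ▸ h1
  have hr1 : r < 1 := lt_of_le_of_lt hrle (by nlinarith)
  have hg : Summable (fun m : ℕ => r ^ (m + 1)) := by
    have := (summable_geometric_of_lt_one hr0.le hr1).mul_right r
    simpa [pow_succ] using this
  have hgsum : ∑' m : ℕ, r ^ (m + 1) = (1 - r)⁻¹ * r := by
    simp only [pow_succ]
    rw [tsum_mul_right, tsum_geometric_of_lt_one hr0.le hr1]
  set s0 := Real.sqrt c2 * ‖v‖ with hs0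
  have hs0pos : 0 < s0 := mul_pos (Real.sqrt_pos.2 hc2) hvn
  have hs0sq : s0 ^ 2 = c2 * ‖v‖ ^ 2 := by
    rw [hs0, mul_pow, Real.sq_sqrt hc2.le]
  have hinj : Function.Injective (fun k : ℤ => ((k : ℝ) / ‖v‖ ^ 2) • v) := by
    intro a b hab
    have h := smul_left_injective ℝ hv hab
    field_simp at h
    exact_mod_cast h
  rw [gaussianMass, dual_diff_zero v hv,
    tsum_image (s := {k : ℤ | k ≠ 0})
      (fun y : Euc n => Real.exp (-Real.pi * ‖y‖ ^ 2 / (1 / s0) ^ 2)) hinj.injOn]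
  have hterm : ∀ k : {k : ℤ // k ≠ 0},
      Real.exp (-Real.pi * ‖((k.1 : ℝ) / ‖v‖ ^ 2) • v‖ ^ 2 / (1 / s0) ^ 2)
        = Real.exp (-(P * (k.1 : ℝ) ^ 2)) := by
    intro k
    congr 1
    rw [norm_smul, mul_pow, Real.norm_eq_abs, sq_abs]
    have h1 : ((1:ℝ)/s0)^2 = 1/(c2 * ‖v‖^2) := by rw [div_pow, one_pow, hs0sq]
    rw [h1, hP]
    field_simp
  refine le_trans (le_of_eq (tsum_congr hterm)) ?_
  have hbound : ∀ k : {k : ℤ // k ≠ 0},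
      Real.exp (-(P * (k.1 : ℝ) ^ 2)) ≤ r ^ (iota k.1 + 1) := by
    intro k
    rw [hr, ← Real.exp_nat_mul]
    apply Real.exp_le_exp.2
    have hb := iota_bound k.1 k.2
    have hbr : ((iota k.1 : ℝ)) + 1 ≤ 2 * ((k.1 : ℝ)) ^ 2 := by exact_mod_cast hb
    push_cast
    nlinarith [mul_le_mul_of_nonneg_right hbr (by positivity : (0:ℝ) ≤ P / 2)]
  have hf : Summable (fun k : {k : ℤ // k ≠ 0} => Real.exp (-(P * (k.1 : ℝ) ^ 2))) := by
    apply Summable.of_nonneg_of_le (fun k => (Real.exp_pos _).le) hbound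
    exact hg.comp_injective iota_inj
  refine le_trans (Summable.tsum_le_tsum_of_inj (fun k : {k : ℤ // k ≠ 0} => iota k.1) iota_inj
    (fun c _ => pow_nonneg hr0.le _) hbound hf hg) ?_
  rw [hgsum, inv_mul_eq_div, div_le_iff₀ (by linarith : (0:ℝ) < 1 - r)]
  nlinarith [mul_le_mul_of_nonneg_left hrle hε.le]

lemma eta_span_le (v : Euc n) (hv : v ≠ 0) (ε : ℝ) (hε : 0 < ε) (hε2 : ε < 1/2) :
    eta ε ((Submodule.span ℤ ({v} : Set (Euc n))) : Set (Euc n))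
      ≤ Real.sqrt (Real.logb 2 (1/ε)) * ‖v‖ := by
  have hvn : (0 : ℝ) < ‖v‖ := norm_pos_iff.2 hv
  have hl : 0 < Real.log (1/ε) := Real.log_pos (by rw [lt_div_iff₀ hε]; linarith)
  have hc2 : 0 < Real.logb 2 (1/ε) := div_pos hl (Real.log_pos one_lt_two)
  apply csInf_le
  · exact ⟨0, fun x hx => hx.1.le⟩
  · exact ⟨mul_pos (Real.sqrt_pos.2 hc2) hvn, mass_le v hv ε hε hε2⟩

end EtaHelper

theorem etaBar_le_lambda_one {n : ℕ} (b : Fin n → Euc n)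
    (hb : LinearIndependent ℝ b)
    (L : Submodule ℤ (Euc n)) (hL : L = Submodule.span ℤ (Set.range b))
    (ε : ℝ) (hε : 0 < ε) (hε2 : ε < 1/2) :
    etaBar ε L ≤ Real.sqrt (Real.logb 2 (1 / ε)) * lambdaOne (L : Set (Euc n)) := by
  rcases Nat.eq_zero_or_pos n with hn | hn
  · subst hn
    have hLbot : L = ⊥ := by
      rw [hL]
      have h0 : Set.range b = ∅ := Set.range_eq_empty b
      rw [h0, Submodule.span_empty]
    have h1 : etaBar ε L = 0 := by
      rw [etaBar]
      convert Real.sInf_empty using 2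
      rw [Set.eq_empty_iff_forall_notMem]
      rintro t ⟨L', hle, hne, _⟩
      exact hne (le_bot_iff.1 (hLbot ▸ hle))
    have h2 : lambdaOne (L : Set (Euc 0)) = 0 := by
      rw [lambdaOne]
      convert Real.sInf_empty using 2
      rw [Set.eq_empty_iff_forall_notMem]
      rintro r ⟨x, _, hx0, _⟩
      exact hx0 (Subsingleton.elim x 0)
    rw [h1, h2, mul_zero]
  · set c := Real.sqrt (Real.logb 2 (1 / ε)) with hc
    have hl : 0 < Real.log (1/ε) := Real.log_pos (by rw [lt_div_iff₀ hε]; linarith)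
    have hc2 : 0 < Real.logb 2 (1/ε) := div_pos hl (Real.log_pos one_lt_two)
    have hcpos : 0 < c := Real.sqrt_pos.2 hc2
    have hb0 : b ⟨0, hn⟩ ≠ 0 := hb.ne_zero _
    have hb0L : b ⟨0, hn⟩ ∈ L := hL ▸ Submodule.subset_span (Set.mem_range_self _)
    have hSne : Set.Nonempty {r : ℝ | ∃ x ∈ (L : Set (Euc n)), x ≠ 0 ∧ ‖x‖ = r} :=
      ⟨‖b ⟨0, hn⟩‖, b ⟨0, hn⟩, hb0L, hb0, rfl⟩
    refine le_of_forall_pos_le_add ?_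
    intro δ hδ
    obtain ⟨rv, ⟨v, hvL, hv0, hrv⟩, hlt⟩ :=
      Real.lt_sInf_add_pos hSne (div_pos hδ hcpos)
    have hbdd : BddBelow {t : ℝ | ∃ L' : Submodule ℤ (Euc n),
        L' ≤ L ∧ L' ≠ ⊥ ∧ t = eta ε (L' : Set (Euc n))} := by
      refine ⟨0, ?_⟩
      rintro t ⟨L', -, -, rfl⟩
      exact Real.sInf_nonneg (fun x hx => hx.1.le)
    have hmem : eta ε ((Submodule.span ℤ ({v} : Set (Euc n))) : Set (Euc n)) ∈
        {t : ℝ | ∃ L' : Submodule ℤ (Euc n),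
          L' ≤ L ∧ L' ≠ ⊥ ∧ t = eta ε (L' : Set (Euc n))} := by
      refine ⟨Submodule.span ℤ {v}, Submodule.span_le.2 (Set.singleton_subset_iff.2 hvL), ?_, rfl⟩
      simpa [Submodule.span_singleton_eq_bot] using hv0
    calc etaBar ε L ≤ eta ε ((Submodule.span ℤ ({v} : Set (Euc n))) : Set (Euc n)) :=
          csInf_le hbdd hmem
      _ ≤ c * ‖v‖ := EtaHelper.eta_span_le v hv0 ε hε hε2
      _ ≤ c * (lambdaOne (L : Set (Euc n)) + δ / c) := by
          apply mul_le_mul_of_nonneg_left _ hcpos.le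
          rw [lambdaOne]
          rw [← hrv] at hlt
          exact hlt.le
      _ = c * lambdaOne (L : Set (Euc n)) + δ := by
          rw [mul_add, mul_div_cancel₀ _ hcpos.ne']
end
end

section
/- Assuming the reverse Minkowski theorem (every stable lattice $\mathcal{S} \subset \mathbb{R}^k$ satisfies $\eta_{1/2}(\mathcal{S}) \le 10(\log_2 k + 2)$), every lattice $\mathcal{L} \subset \mathbb{R}^n$ has a nonzero sublattice $\mathcal{L}' \subseteq \mathcal{L}$ with $\eta_{1/2}(\mathcal{L}') \le 10(\log_2 n + 2)\det(\mathcal{L})^{1/n}$, where $\mathcal{L}$ has rank $n$. -/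
open scoped BigOperators RealInnerProductSpace

noncomputable section

def IsLatticeBasis {n : ℕ} {ι : Type*} (v : ι → Euc n) (L : Submodule ℤ (Euc n)) : Prop :=
  LinearIndependent ℤ v ∧ Submodule.span ℤ (Set.range v) = L

def gramDet {n m : ℕ} (v : Fin m → Euc n) : ℝ :=
  Real.sqrt (Matrix.det (Matrix.of fun i j => ⟪v i, v j⟫))

end

noncomputable section
open scoped Matrix Pointwise
namespace SSRM
variable {K : Type*} [Field K] [LinearOrder K] [IsStrictOrderedRing K]

def gram {m n : ℕ} (v : Fin m → (Fin n → K)) : Matrix (Fin m) (Fin m) K :=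
  Matrix.of fun i j => dotProduct (v i) (v j)

lemma dot_gram_mulVec {m n : ℕ} (v : Fin m → (Fin n → K)) (g : Fin m → K) :
    dotProduct g ((gram v).mulVec g) = ∑ t, ((∑ j, g j • v j) t) ^ 2 := by
  simp only [dotProduct, Matrix.mulVec, gram, Matrix.of_apply]
  calc ∑ x, g x * ∑ y, (∑ i, v x i * v y i) * g y
      = ∑ x, ∑ y, ∑ i, (g x * v x i) * (g y * v y i) := by
        refine Finset.sum_congr rfl fun x _ => ?_
        rw [Finset.mul_sum]
        refine Finset.sum_congr rfl fun y _ => ?_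
        rw [Finset.sum_mul, Finset.mul_sum]
        exact Finset.sum_congr rfl fun i _ => by ring
    _ = ∑ x, ∑ i, ∑ y, (g x * v x i) * (g y * v y i) := by
        exact Finset.sum_congr rfl fun x _ => Finset.sum_comm
    _ = ∑ i, ∑ x, ∑ y, (g x * v x i) * (g y * v y i) := Finset.sum_comm
    _ = ∑ t, ((∑ j, g j • v j) t) ^ 2 := by
        refine Finset.sum_congr rfl fun t _ => ?_
        rw [← Finset.sum_mul_sum]
        simp [Finset.sum_apply, sq]

lemma gram_det_ne_zero_iff {m n : ℕ} (v : Fin m → (Fin n → K)) :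
    (gram v).det ≠ 0 ↔ LinearIndependent K v := by
  constructor
  · intro hdet
    rw [Fintype.linearIndependent_iff]
    intro g hg
    by_contra hne
    push_neg at hne
    obtain ⟨i, hi⟩ := hne
    apply hdet
    rw [← Matrix.exists_mulVec_eq_zero_iff]
    refine ⟨g, fun h => hi (congrFun h i), ?_⟩
    funext j
    simp only [Matrix.mulVec, gram, Matrix.of_apply, dotProduct, Pi.zero_apply]
    calc ∑ k, (∑ t, v j t * v k t) * g k
        = ∑ k, ∑ t, v j t * (g k * v k t) := by
          refine Finset.sum_congr rfl fun k _ => ?_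
          rw [Finset.sum_mul]; exact Finset.sum_congr rfl fun t _ => by ring
      _ = ∑ t, ∑ k, v j t * (g k * v k t) := Finset.sum_comm
      _ = ∑ t, v j t * (∑ k, g k • v k) t := by
          refine Finset.sum_congr rfl fun t _ => ?_
          simp [Finset.sum_apply, Finset.mul_sum]
      _ = 0 := by rw [hg]; simp
  · intro hv hdet
    rw [← Matrix.exists_mulVec_eq_zero_iff] at hdet
    obtain ⟨g, hg0, hg⟩ := hdet
    have key : (∑ j, g j • v j) = 0 := by
      have h2 : dotProduct g ((gram v).mulVec g) = 0 := by rw [hg]; simp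
      rw [dot_gram_mulVec] at h2
      funext t
      have h4 := (Finset.sum_eq_zero_iff_of_nonneg
        (fun i _ => sq_nonneg ((∑ j, g j • v j) i))).mp h2 t (Finset.mem_univ t)
      have := sq_eq_zero_iff.mp h4
      simpa using this
    exact hg0 (funext fun i => Fintype.linearIndependent_iff.mp hv g key i)

lemma gram_posDef {m n : ℕ} {v : Fin m → (Fin n → ℝ)} (hv : LinearIndependent ℝ v) :
    (gram v).PosDef := by
  rw [Matrix.posDef_iff_dotProduct_mulVec]
  constructor
  · ext i j
    simp [gram, Matrix.IsHermitian, Matrix.conjTranspose, dotProduct, mul_comm]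
  · intro x hx
    have h1 : dotProduct (star x) ((gram v).mulVec x)
        = ∑ t, ((∑ j, x j • v j) t) ^ 2 := by
      rw [show (star x) = x from rfl, dot_gram_mulVec]
    rw [h1]
    have hne : (∑ j, x j • v j) ≠ 0 := by
      intro h
      exact hx (funext fun i => Fintype.linearIndependent_iff.mp hv x h i)
    have : ∃ t, (∑ j, x j • v j) t ≠ 0 := by
      by_contra hc; push_neg at hc; exact hne (funext hc)
    obtain ⟨t, ht⟩ := this
    have : (0:ℝ) < ∑ t, ((∑ j, x j • v j) t) ^ 2 :=
      Finset.sum_pos' (fun i _ => sq_nonneg _)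
        ⟨t, Finset.mem_univ t, by positivity⟩
    exact this

lemma gram_comb {m k n : ℕ} (w : Fin k → (Fin n → K)) (v : Fin m → (Fin n → K))
    (C : Matrix (Fin k) (Fin m) K) (h : ∀ j, v j = ∑ i, C i j • w i) :
    gram v = Cᵀ * gram w * C := by
  ext a b
  simp only [gram, Matrix.of_apply, h, Matrix.mul_apply, Matrix.transpose_apply,
    dotProduct, Finset.sum_apply, Pi.smul_apply, smul_eq_mul]
  calc ∑ t, (∑ i, C i a * w i t) * (∑ i, C i b * w i t)
      = ∑ t, ∑ i, ∑ j, (C i a * w i t) * (C j b * w j t) := by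
        refine Finset.sum_congr rfl fun t _ => ?_; rw [Finset.sum_mul_sum]
    _ = ∑ i, ∑ t, ∑ j, (C i a * w i t) * (C j b * w j t) := Finset.sum_comm
    _ = ∑ i, ∑ j, ∑ t, (C i a * w i t) * (C j b * w j t) := by
        exact Finset.sum_congr rfl fun i _ => Finset.sum_comm
    _ = ∑ x, (∑ y, C y a * ∑ t, w y t * w x t) * C x b := by
        rw [Finset.sum_comm]
        refine Finset.sum_congr rfl fun j _ => ?_
        rw [Finset.sum_mul]
        refine Finset.sum_congr rfl fun i _ => ?_
        rw [Finset.mul_sum, Finset.sum_mul]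
        exact Finset.sum_congr rfl fun t _ => by ring

lemma gram_det_comb {k n : ℕ} (w : Fin k → (Fin n → K)) (v : Fin k → (Fin n → K))
    (C : Matrix (Fin k) (Fin k) K) (h : ∀ j, v j = ∑ i, C i j • w i) :
    (gram v).det = C.det ^ 2 * (gram w).det := by
  rw [gram_comb w v C h, Matrix.det_mul, Matrix.det_mul, Matrix.det_transpose]
  ring

end SSRM

namespace SSRM

def co {n : ℕ} (x : Euc n) : Fin n → ℝ := fun i => x i

lemma inner_eq_dot {n : ℕ} (x y : Euc n) : ⟪x, y⟫ = dotProduct (co x) (co y) := by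
  simp [PiLp.inner_apply, RCLike.inner_apply, dotProduct, co, mul_comm]

lemma gramDet_eq {n m : ℕ} (v : Fin m → Euc n) :
    gramDet v = Real.sqrt ((gram fun i => co (v i)).det) := by
  have h : (Matrix.of fun i j => ⟪v i, v j⟫) = gram fun i => co (v i) := by
    ext i j
    exact inner_eq_dot _ _
  rw [gramDet, h]

def eucEquiv (n : ℕ) : Euc n ≃ₗ[ℝ] (Fin n → ℝ) := WithLp.linearEquiv 2 ℝ (Fin n → ℝ)

lemma eucEquiv_apply {n : ℕ} (x : Euc n) : eucEquiv n x = co x := rfl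

lemma equiv_linearIndependent_iff {R M N ι : Type*} [Ring R] [AddCommGroup M] [AddCommGroup N]
    [Module R M] [Module R N] (e : M ≃ₗ[R] N) (v : ι → M) :
    LinearIndependent R (fun i => e (v i)) ↔ LinearIndependent R v := by
  constructor
  · intro h
    exact LinearIndependent.of_comp e.toLinearMap (by simpa [Function.comp_def] using h)
  · intro h
    simpa [Function.comp_def] using h.map' e.toLinearMap e.ker

lemma linearIndependent_co_iff {n m : ℕ} (v : Fin m → Euc n) :
    LinearIndependent ℝ (fun i => co (v i)) ↔ LinearIndependent ℝ v :=
  equiv_linearIndependent_iff (eucEquiv n) v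

lemma gramDet_nonneg {n m : ℕ} (v : Fin m → Euc n) : 0 ≤ gramDet v := Real.sqrt_nonneg _

lemma gramDet_pos {n m : ℕ} {v : Fin m → Euc n} (hv : LinearIndependent ℝ v) :
    0 < gramDet v := by
  rw [gramDet_eq]
  exact Real.sqrt_pos.mpr (gram_posDef ((linearIndependent_co_iff v).mpr hv)).det_pos

lemma co_sum_int {n k : ℕ} (w : Fin k → Euc n) (C : Fin k → ℤ) :
    co (∑ i, C i • w i) = ∑ i, (C i : ℝ) • co (w i) := by
  have : (∑ i, C i • w i) = ∑ i, (C i : ℝ) • w i := by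
    refine Finset.sum_congr rfl fun i _ => ?_
    rw [Int.cast_smul_eq_zsmul]
  rw [this]
  rw [show co (∑ i, (C i : ℝ) • w i) = eucEquiv n (∑ i, (C i : ℝ) • w i) from rfl]
  rw [map_sum]
  simp [eucEquiv_apply]

lemma gramDet_comb_int {n k : ℕ} (w : Fin k → Euc n) (v : Fin k → Euc n)
    (C : Matrix (Fin k) (Fin k) ℤ) (h : ∀ j, v j = ∑ i, C i j • w i)
    (hv : LinearIndependent ℝ v) : gramDet w ≤ gramDet v := by
  set cw := fun i => co (w i) with hcw
  set cv := fun i => co (v i) with hcv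
  have hCR : ∀ j, cv j = ∑ i, ((Int.castRingHom ℝ).mapMatrix C) i j • cw i := by
    intro j
    simp only [hcv, h j, co_sum_int]
    rfl
  have hdet : (gram cv).det = (((Int.castRingHom ℝ).mapMatrix C).det) ^ 2 * (gram cw).det :=
    gram_det_comb cw cv _ hCR
  have hvne : (gram cv).det ≠ 0 :=
    (gram_det_ne_zero_iff cv).mpr ((linearIndependent_co_iff v).mpr hv)
  have hCdet : (((Int.castRingHom ℝ).mapMatrix C).det) = ((C.det : ℤ) : ℝ) :=
    (RingHom.map_det (Int.castRingHom ℝ) C).symm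
  have hC0 : C.det ≠ 0 := by
    intro h0
    apply hvne
    rw [hdet, hCdet, h0]
    simp
  have h1le : (1:ℝ) ≤ (((Int.castRingHom ℝ).mapMatrix C).det) ^ 2 := by
    rw [hCdet]
    have : (1:ℤ) ≤ C.det ^ 2 := by
      have := Int.one_le_abs (by simpa using hC0)
      nlinarith [abs_nonneg C.det, sq_abs C.det]
    exact_mod_cast by exact_mod_cast (by exact_mod_cast this : (1:ℝ) ≤ ((C.det ^ 2 : ℤ) : ℝ))
  rw [gramDet_eq, gramDet_eq, ← hcw, ← hcv, hdet]
  rw [Real.sqrt_mul (sq_nonneg _)]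
  calc Real.sqrt ((gram cw).det) = 1 * Real.sqrt ((gram cw).det) := (one_mul _).symm
    _ ≤ Real.sqrt ((((Int.castRingHom ℝ).mapMatrix C).det) ^ 2) * Real.sqrt ((gram cw).det) := by
        apply mul_le_mul_of_nonneg_right _ (Real.sqrt_nonneg _)
        rw [show (1:ℝ) = Real.sqrt 1 by simp]
        exact Real.sqrt_le_sqrt h1le

lemma gramDet_conformal {n n' m : ℕ} (v : Fin m → Euc n) (v' : Fin m → Euc n')
    (c : ℝ) (hc : 0 ≤ c) (h : ∀ i j, ⟪v' i, v' j⟫ = c ^ 2 * ⟪v i, v j⟫) :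
    gramDet v' = c ^ m * gramDet v := by
  unfold gramDet
  have : (Matrix.of fun i j => ⟪v' i, v' j⟫) = (c ^ 2) • (Matrix.of fun i j => ⟪v i, v j⟫) := by
    ext i j; simp [h]
  rw [this, Matrix.det_smul, Fintype.card_fin,
    show ((c ^ 2) ^ m : ℝ) = (c ^ m) ^ 2 by ring,
    Real.sqrt_mul (sq_nonneg _), Real.sqrt_sq (pow_nonneg hc m)]

lemma real_indep_of_int_indep {n m : ℕ} {b : Fin n → Euc n} (hbR : LinearIndependent ℝ b)
    {v : Fin m → Euc n} (hv : LinearIndependent ℤ v)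
    (hvL : ∀ i, v i ∈ Submodule.span ℤ (Set.range b)) : LinearIndependent ℝ v := by
  have hex : ∀ j, ∃ c : Fin n → ℤ, ∑ i, c i • b i = v j := by
    intro j
    exact (Submodule.mem_span_range_iff_exists_fun ℤ).mp (hvL j)
  choose cZ hcZ using hex
  -- ℤ-independence of the integer coordinate vectors
  have hZ : LinearIndependent ℤ cZ := by
    apply LinearIndependent.of_comp ((Fintype.linearCombination ℤ) b)
    have : (⇑((Fintype.linearCombination ℤ) b) ∘ cZ) = v := by
      funext j
      simp [Fintype.linearCombination_apply, hcZ j]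
    rwa [this]
  -- transfer to ℚ coordinates
  let ratMap : (Fin n → ℤ) →ₗ[ℤ] (Fin n → ℚ) :=
    LinearMap.pi fun i => ((Int.castAddHom ℚ).toIntLinearMap).comp (LinearMap.proj i)
  have hratker : LinearMap.ker ratMap = ⊥ := by
    rw [LinearMap.ker_eq_bot]
    intro x y hxy
    funext i
    have := congrFun hxy i
    simpa [ratMap] using this
  have hQZ : LinearIndependent ℤ (fun j => (fun i => ((cZ j i : ℚ)))) := by
    have := hZ.map' ratMap hratker
    convert this using 1
    funext j i
    simp [ratMap]
    all_goals rfl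
  have hQ : LinearIndependent ℚ (fun j => (fun i => ((cZ j i : ℚ)))) :=
    (LinearIndependent.iff_fractionRing ℤ ℚ).mp hQZ
  -- Gram determinant over ℚ is nonzero; transfer to ℝ
  have hQdet : (gram fun j => (fun i => ((cZ j i : ℚ)))).det ≠ 0 :=
    (gram_det_ne_zero_iff _).mpr hQ
  have hmapgram : gram (fun j => (fun i => ((cZ j i : ℝ)))) =
      ((algebraMap ℚ ℝ).mapMatrix (gram fun j => (fun i => ((cZ j i : ℚ))))) := by
    ext a bb
    simp only [gram, Matrix.of_apply, dotProduct, RingHom.mapMatrix_apply,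
      Matrix.map_apply]
    push_cast
    rfl
  have hRdet : (gram fun j => (fun i => ((cZ j i : ℝ)))).det ≠ 0 := by
    rw [hmapgram, ← RingHom.map_det]
    intro h0
    have h0' : (algebraMap ℚ ℝ) ((gram fun j i => ((cZ j i : ℚ))).det) = (algebraMap ℚ ℝ) 0 := by
      simpa using h0
    exact hQdet ((algebraMap ℚ ℝ).injective h0')
  have hR : LinearIndependent ℝ (fun j => (fun i => ((cZ j i : ℝ)))) :=
    (gram_det_ne_zero_iff _).mp hRdet
  -- map back into Euc n
  have hker : LinearMap.ker ((Fintype.linearCombination ℝ) b) = ⊥ := by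
    rw [LinearMap.ker_eq_bot']
    intro x hx
    rw [Fintype.linearCombination_apply] at hx
    exact funext (Fintype.linearIndependent_iff.mp hbR x hx)
  have := hR.map' ((Fintype.linearCombination ℝ) b) hker
  have heq : (⇑((Fintype.linearCombination ℝ) b) ∘ (fun j => (fun i => ((cZ j i : ℝ))))) = v := by
    funext j
    simp only [Function.comp_apply, Fintype.linearCombination_apply]
    rw [← hcZ j]
    exact Finset.sum_congr rfl fun i _ => Int.cast_smul_eq_zsmul ℝ (cZ j i) (b i)
  rwa [heq] at this

end SSRM

namespace SSRM

lemma gaussianMass_comp {n n' : ℕ} (A : Set (Euc n)) (A' : Set (Euc n'))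
    (e : ↥A ≃ ↥A') (c : ℝ) (hc : c ≠ 0) (σ : ℝ)
    (he : ∀ x : ↥A, ‖(e x : Euc n')‖ = c * ‖(x : Euc n)‖) :
    gaussianMass (c * σ) A' = gaussianMass σ A := by
  rw [gaussianMass, gaussianMass, ← Equiv.tsum_eq e]
  refine tsum_congr fun x => ?_
  rw [he x]
  congr 1
  rw [mul_pow]
  rcases eq_or_ne σ 0 with h0 | h0
  · simp [h0]
  · rw [mul_pow]
    field_simp

lemma eta_scale {n n' : ℕ} (L : Set (Euc n)) (L' : Set (Euc n')) (ε c : ℝ) (hc : 0 < c)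
    (e : ↥(dualLattice L \ {0}) ≃ ↥(dualLattice L' \ {0}))
    (he : ∀ x : ↥(dualLattice L \ {0}), ‖(e x : Euc n')‖ = c⁻¹ * ‖(x : Euc n)‖) :
    eta ε L' = c * eta ε L := by
  have hmass : ∀ s : ℝ, gaussianMass (1 / s) (dualLattice L' \ {0})
      = gaussianMass (1 / (c⁻¹ * s)) (dualLattice L \ {0}) := by
    intro s
    have := gaussianMass_comp (dualLattice L \ {0}) (dualLattice L' \ {0}) e c⁻¹
      (inv_ne_zero hc.ne') (1 / (c⁻¹ * s)) he
    rw [← this]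
    congr 1
    rcases eq_or_ne s 0 with h0 | h0
    · simp [h0]
    · field_simp
  have hset : {s : ℝ | 0 < s ∧ gaussianMass (1 / s) (dualLattice L' \ {0}) ≤ ε}
      = c • {s : ℝ | 0 < s ∧ gaussianMass (1 / s) (dualLattice L \ {0}) ≤ ε} := by
    ext s
    rw [Set.mem_smul_set_iff_inv_smul_mem₀ hc.ne']
    simp only [Set.mem_setOf_eq, smul_eq_mul]
    constructor
    · rintro ⟨hs, hm⟩
      exact ⟨by positivity, by rwa [hmass s] at hm⟩
    · rintro ⟨hs, hm⟩
      have hs' : 0 < s := by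
        have := mul_pos hc hs
        rwa [mul_inv_cancel_left₀ hc.ne'] at this
      exact ⟨hs', by rwa [hmass s]⟩
  rw [eta, eta, hset, Real.sInf_smul_of_nonneg hc.le]
  rfl

end SSRM


namespace SSRM

/-- The reverse Minkowski hypothesis, abbreviated. -/
def RMHyp : Prop :=
  ∀ (k : ℕ) (S : Submodule ℤ (Euc k)) (u : Fin k → Euc k),
      LinearIndependent ℝ u → IsLatticeBasis u S → gramDet u = 1 →
      (∀ (m : ℕ) (w : Fin m → Euc k), 0 < m → LinearIndependent ℤ w →
        (∀ i, w i ∈ S) → 1 ≤ gramDet w) →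
      eta (1/2) (S : Set (Euc k)) ≤ 10 * (Real.logb 2 k + 2)

lemma int_smul_one_injective : Function.Injective fun r : ℤ => r • (1:ℝ) := by
  intro a b h
  have : ((a : ℝ)) = (b : ℝ) := by simpa using h
  exact_mod_cast this

lemma stable_case (RM : RMHyp) {n k : ℕ} (hk : 0 < k) (w : Fin k → Euc n)
    (hwR : LinearIndependent ℝ w)
    (hstab : ∀ (m : ℕ) (v : Fin m → Euc n), 0 < m → LinearIndependent ℤ v →
      (∀ i, v i ∈ Submodule.span ℤ (Set.range w)) →
      gramDet w ^ ((m : ℝ)/k) ≤ gramDet v) :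
    eta (1/2) ((Submodule.span ℤ (Set.range w) : Submodule ℤ (Euc n)) : Set (Euc n)) ≤
      10 * (Real.logb 2 k + 2) * gramDet w ^ ((1 : ℝ)/k) := by
  classical
  have hkR : (0:ℝ) < (k:ℝ) := by exact_mod_cast hk
  set M : Submodule ℤ (Euc n) := Submodule.span ℤ (Set.range w) with hM
  set V : Submodule ℝ (Euc n) := Submodule.span ℝ (Set.range w) with hV
  have hwV : ∀ i, w i ∈ V := fun i => Submodule.subset_span ⟨i, rfl⟩
  set wV : Fin k → V := fun i => ⟨w i, hwV i⟩ with hwVdef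
  have hwVR : LinearIndependent ℝ wV := by
    apply LinearIndependent.of_comp (V.subtype)
    have : (⇑V.subtype ∘ wV) = w := funext fun i => rfl
    rwa [this]
  have hfin : Module.finrank ℝ V = k := by
    rw [hV, finrank_span_eq_card hwR, Fintype.card_fin]
  let T : V ≃ₗᵢ[ℝ] Euc k :=
    (stdOrthonormalBasis ℝ V).repr.trans
      (LinearIsometryEquiv.piLpCongrLeft 2 ℝ ℝ (finCongr hfin))
  set gd : ℝ := gramDet w with hgddef
  have hgd : 0 < gd := gramDet_pos hwR
  set c : ℝ := gd ^ (-(1:ℝ)/k) with hcdef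
  have hc : 0 < c := Real.rpow_pos_of_pos hgd _
  have hck : c ^ k = gd⁻¹ := by
    rw [hcdef, ← Real.rpow_natCast (gd ^ (-(1:ℝ)/k)) k, ← Real.rpow_mul hgd.le]
    rw [show (-(1:ℝ)/k) * (k:ℝ) = -1 by field_simp]
    exact Real.rpow_neg_one gd
  have hcinv : c⁻¹ = gd ^ ((1:ℝ)/k) := by
    rw [hcdef, show (-(1:ℝ)/k) = -((1:ℝ)/k) by ring, Real.rpow_neg hgd.le, inv_inv]
  set u : Fin k → Euc k := fun i => c • (T (wV i)) with hudef
  set S : Submodule ℤ (Euc k) := Submodule.span ℤ (Set.range u) with hS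
  let Θ : V →ₗ[ℤ] Euc k :=
    ((c • (T.toLinearEquiv.toLinearMap : V →ₗ[ℝ] Euc k)) : V →ₗ[ℝ] Euc k).restrictScalars ℤ
  have hΘapp : ∀ y : V, Θ y = c • (T y) := fun y => rfl
  set MV : Submodule ℤ V := Submodule.span ℤ (Set.range wV) with hMV
  have hMmap : MV.map (V.subtype.restrictScalars ℤ) = M := by
    rw [hMV, Submodule.map_span, hM]
    congr 1
    rw [← Set.range_comp]
    rfl
  have hSmap : MV.map Θ = S := by
    rw [hMV, Submodule.map_span, hS]
    congr 1
    rw [← Set.range_comp]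
    rfl
  have hMem1 : ∀ y, y ∈ M → ∃ yv, yv ∈ MV ∧ ((yv : V) : Euc n) = y := by
    intro y hy
    rw [← hMmap] at hy
    obtain ⟨yv, hyv, rfl⟩ := Submodule.mem_map.mp hy
    exact ⟨yv, hyv, rfl⟩
  have hMem2 : ∀ yv : V, yv ∈ MV → ((yv : V) : Euc n) ∈ M := by
    intro yv hyv
    rw [← hMmap]
    exact Submodule.mem_map.mpr ⟨yv, hyv, rfl⟩
  have hMem2' : ∀ yv : V, yv ∈ MV → Θ yv ∈ S := by
    intro yv hyv
    rw [← hSmap]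
    exact Submodule.mem_map.mpr ⟨yv, hyv, rfl⟩
  have hMem3 : ∀ z, z ∈ S → ∃ yv, yv ∈ MV ∧ Θ yv = z := by
    intro z hz
    rw [← hSmap] at hz
    obtain ⟨yv, hyv, rfl⟩ := Submodule.mem_map.mp hz
    exact ⟨yv, hyv, rfl⟩
  have hspanM : Submodule.span ℝ (M : Set (Euc n)) = V := by
    rw [hM, hV]
    exact Submodule.span_span_of_tower ℤ ℝ _
  have huR : LinearIndependent ℝ u := by
    have h1 : LinearIndependent ℝ (fun i => T (wV i)) :=
      (equiv_linearIndependent_iff T.toLinearEquiv wV).mpr hwVR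
    have h2 := (equiv_linearIndependent_iff (LinearEquiv.smulOfNeZero ℝ (Euc k) c hc.ne')
      (fun i => T (wV i))).mpr h1
    exact h2
  have hspanS : Submodule.span ℝ (S : Set (Euc k)) = ⊤ := by
    rw [hS, Submodule.span_span_of_tower ℤ ℝ]
    apply Submodule.eq_top_of_finrank_eq
    rw [finrank_span_eq_card huR, Fintype.card_fin, finrank_euclideanSpace_fin]
  have hinner_Θ : ∀ y z : V, ⟪Θ y, Θ z⟫ = c^2 * ⟪(y : Euc n), (z : Euc n)⟫ := by
    intro y z
    rw [hΘapp, hΘapp, real_inner_smul_left, real_inner_smul_right,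
      LinearIsometryEquiv.inner_map_map, ← Submodule.coe_inner]
    ring
  have hinner_u : ∀ i j, ⟪u i, u j⟫ = c^2 * ⟪w i, w j⟫ := by
    intro i j
    have := hinner_Θ (wV i) (wV j)
    simpa [hΘapp, hudef] using this
  have hgdu : gramDet u = 1 := by
    have := gramDet_conformal w u c hc.le hinner_u
    rw [this, hck, ← hgddef, inv_mul_cancel₀ hgd.ne']
  have huZ : LinearIndependent ℤ u := huR.restrict_scalars int_smul_one_injective
  -- stability of S
  have hstabS : ∀ (m : ℕ) (x : Fin m → Euc k), 0 < m → LinearIndependent ℤ x →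
      (∀ i, x i ∈ S) → 1 ≤ gramDet x := by
    intro m x hm hxZ hxS
    have hex : ∀ i, ∃ yv, yv ∈ MV ∧ Θ yv = x i := fun i => hMem3 _ (hxS i)
    choose yv hyvMV hyvx using hex
    set v : Fin m → Euc n := fun i => ((yv i : V) : Euc n) with hvdef
    have hvM : ∀ i, v i ∈ M := fun i => hMem2 _ (hyvMV i)
    have hyvZ : LinearIndependent ℤ yv := by
      apply LinearIndependent.of_comp Θ
      have : (⇑Θ ∘ yv) = x := funext fun i => hyvx i
      rwa [this]
    have hvZ : LinearIndependent ℤ v := by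
      have hker : LinearMap.ker (V.subtype.restrictScalars ℤ) = ⊥ := by
        rw [LinearMap.ker_eq_bot]
        exact fun a b hab => Subtype.coe_injective hab
      have := hyvZ.map' (V.subtype.restrictScalars ℤ) hker
      have heq : (⇑(V.subtype.restrictScalars ℤ) ∘ yv) = v := funext fun i => rfl
      rwa [heq] at this
    have hlow := hstab m v hm hvZ hvM
    have hinner_x : ∀ i j, ⟪x i, x j⟫ = c^2 * ⟪v i, v j⟫ := by
      intro i j
      rw [← hyvx i, ← hyvx j]
      exact hinner_Θ (yv i) (yv j)
    have hgx : gramDet x = c ^ m * gramDet v := gramDet_conformal v x c hc.le hinner_x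
    have hone : c ^ m * gd ^ ((m:ℝ)/k) = 1 := by
      rw [hcdef, ← Real.rpow_natCast (gd ^ (-(1:ℝ)/k)) m, ← Real.rpow_mul hgd.le,
        ← Real.rpow_add hgd]
      rw [show (-(1:ℝ)/k) * (m:ℝ) + (m:ℝ)/k = 0 by field_simp; ring]
      all_goals exact Real.rpow_zero gd
    calc (1:ℝ) = c ^ m * gd ^ ((m:ℝ)/k) := hone.symm
      _ ≤ c ^ m * gramDet v := by
          apply mul_le_mul_of_nonneg_left hlow (pow_nonneg hc.le m)
      _ = gramDet x := hgx.symm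
  have hRM := RM k S u huR ⟨huZ, rfl⟩ hgdu hstabS
  -- the equivalence between the two (punctured) dual lattices
  have hfwd_mem : ∀ (x : Euc n) (hx : x ∈ dualLattice (M : Set (Euc n)) \ {0}),
      ∀ hxV : x ∈ V, (c⁻¹ • (T ⟨x, hxV⟩) : Euc k) ∈ dualLattice (S : Set (Euc k)) \ {0} := by
    intro x hx hxV
    obtain ⟨⟨hx1, hx2⟩, hx0⟩ := hx
    constructor
    · constructor
      · rw [hspanS]; trivial
      · intro y hy
        obtain ⟨yv, hyvMV, rfl⟩ := hMem3 y hy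
        rw [hΘapp, real_inner_smul_left, real_inner_smul_right,
          LinearIsometryEquiv.inner_map_map]
        have : ⟪(⟨x, hxV⟩ : V), yv⟫ = ⟪x, ((yv : V) : Euc n)⟫ := by
          rw [Submodule.coe_inner]
        rw [this, ← mul_assoc, inv_mul_cancel₀ hc.ne', one_mul]
        exact hx2 _ (hMem2 _ hyvMV)
    · intro h0
      apply hx0
      have h1 : (T ⟨x, hxV⟩ : Euc k) = 0 := by
        have := (smul_eq_zero.mp h0).resolve_left (inv_ne_zero hc.ne')
        exact this
      have h2 : (⟨x, hxV⟩ : V) = 0 := by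
        apply T.injective
        simpa using h1
      have : x = 0 := by
        have := congrArg (Subtype.val) h2
        simpa using this
      simp [this]
  have hbwd_mem : ∀ (z : Euc k), z ∈ dualLattice (S : Set (Euc k)) \ {0} →
      (c • ((T.symm z : V) : Euc n)) ∈ dualLattice (M : Set (Euc n)) \ {0} := by
    intro z hz
    obtain ⟨⟨hz1, hz2⟩, hz0⟩ := hz
    constructor
    · constructor
      · rw [hspanM]
        exact V.smul_mem c (T.symm z).2
      · intro y hy
        obtain ⟨yv, hyvMV, rfl⟩ := hMem1 y hy
        have : ⟪c • ((T.symm z : V) : Euc n), ((yv : V) : Euc n)⟫ = ⟪z, Θ yv⟫ := by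
          rw [real_inner_smul_left, hΘapp, real_inner_smul_right]
          congr 1
          rw [← Submodule.coe_inner, ← LinearIsometryEquiv.inner_map_map T,
            LinearIsometryEquiv.apply_symm_apply]
        rw [this]
        exact hz2 _ (hMem2' _ hyvMV)
    · intro h0
      apply hz0
      have h1 : ((T.symm z : V) : Euc n) = 0 := by
        have := (smul_eq_zero.mp h0).resolve_left hc.ne'
        exact this
      have h2 : (T.symm z : V) = 0 := Subtype.coe_injective (by simpa using h1)
      have : z = 0 := by
        have := congrArg T h2
        simpa using this
      simp [this]
  -- build the equiv
  let e : ↥(dualLattice (M : Set (Euc n)) \ {0}) ≃ ↥(dualLattice (S : Set (Euc k)) \ {0}) :=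
    { toFun := fun x => ⟨c⁻¹ • (T ⟨(x : Euc n), by
        have hx1 := x.2.1.1
        rwa [hspanM] at hx1⟩), hfwd_mem x x.2 _⟩
      invFun := fun z => ⟨c • ((T.symm z : V) : Euc n), hbwd_mem z z.2⟩
      left_inv := by
        intro x
        apply Subtype.ext
        show c • ((T.symm (c⁻¹ • T ⟨(x : Euc n), _⟩) : V) : Euc n) = (x : Euc n)
        rw [map_smul, LinearIsometryEquiv.symm_apply_apply, Submodule.coe_smul,
          smul_smul, mul_inv_cancel₀ hc.ne', one_smul]
      right_inv := by
        intro z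
        apply Subtype.ext
        show c⁻¹ • (T (c • T.symm (z : Euc k)) : Euc k) = (z : Euc k)
        rw [map_smul, LinearIsometryEquiv.apply_symm_apply, smul_smul,
          inv_mul_cancel₀ hc.ne', one_smul] }
  have he : ∀ x : ↥(dualLattice (M : Set (Euc n)) \ {0}),
      ‖(e x : Euc k)‖ = c⁻¹ * ‖(x : Euc n)‖ := by
    intro x
    show ‖c⁻¹ • (T _ : Euc k)‖ = _
    rw [norm_smul, LinearIsometryEquiv.norm_map, Real.norm_eq_abs,
      abs_of_pos (inv_pos.mpr hc)]
    rfl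
  have hscale := eta_scale (M : Set (Euc n)) (S : Set (Euc k)) (1/2) c hc e he
  have : eta (1/2) (M : Set (Euc n)) = c⁻¹ * eta (1/2) (S : Set (Euc k)) := by
    rw [hscale, ← mul_assoc, inv_mul_cancel₀ hc.ne', one_mul]
  rw [← hM] at *
  rw [this, hcinv]
  calc gd ^ ((1:ℝ)/k) * eta (1/2) (S : Set (Euc k))
      ≤ gd ^ ((1:ℝ)/k) * (10 * (Real.logb 2 k + 2)) := by
        apply mul_le_mul_of_nonneg_left hRM (Real.rpow_nonneg hgd.le _)
    _ = 10 * (Real.logb 2 k + 2) * gd ^ ((1:ℝ)/k) := by ring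


lemma key (RM : RMHyp) {n : ℕ} : ∀ k : ℕ, 0 < k → ∀ w : Fin k → Euc n,
    LinearIndependent ℝ w →
    (∀ (m : ℕ) (v : Fin m → Euc n), LinearIndependent ℤ v →
      (∀ i, v i ∈ Submodule.span ℤ (Set.range w)) → LinearIndependent ℝ v) →
    ∃ L' : Submodule ℤ (Euc n), L' ≤ Submodule.span ℤ (Set.range w) ∧ L' ≠ ⊥ ∧
      eta (1/2) (L' : Set (Euc n)) ≤ 10 * (Real.logb 2 k + 2) * gramDet w ^ ((1:ℝ)/k) := by
  intro k
  induction k using Nat.strong_induction_on with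
  | _ k IH =>
  intro hk w hwR hamb
  by_cases hP : ∀ (m : ℕ) (v : Fin m → Euc n), 0 < m → LinearIndependent ℤ v →
      (∀ i, v i ∈ Submodule.span ℤ (Set.range w)) → gramDet w ^ ((m:ℝ)/k) ≤ gramDet v
  · refine ⟨Submodule.span ℤ (Set.range w), le_rfl, ?_, stable_case RM hk w hwR hP⟩
    intro hbot
    have hw0 : w ⟨0, hk⟩ ∈ Submodule.span ℤ (Set.range w) := Submodule.subset_span ⟨_, rfl⟩
    rw [hbot] at hw0
    exact (hwR.ne_zero ⟨0, hk⟩) (by simpa using hw0)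
  · push_neg at hP
    obtain ⟨m, v, hm, hvZ, hvmem, hlt⟩ := hP
    have hvR : LinearIndependent ℝ v := hamb m v hvZ hvmem
    have hkne : ((k:ℝ)) ≠ 0 := Nat.cast_ne_zero.mpr hk.ne'
    have hmne : ((m:ℝ)) ≠ 0 := Nat.cast_ne_zero.mpr hm.ne'
    have hgw : 0 < gramDet w := gramDet_pos hwR
    have hgv : 0 < gramDet v := gramDet_pos hvR
    -- m ≤ k
    have hZR : Submodule.span ℤ (Set.range w) ≤
        (Submodule.span ℝ (Set.range w)).restrictScalars ℤ :=
      Submodule.span_le.mpr Submodule.subset_span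
    have hvV : ∀ i, v i ∈ Submodule.span ℝ (Set.range w) := fun i => hZR (hvmem i)
    have hmk : m ≤ k := by
      set V : Submodule ℝ (Euc n) := Submodule.span ℝ (Set.range w)
      let vV : Fin m → V := fun i => ⟨v i, hvV i⟩
      have hvVR : LinearIndependent ℝ vV := by
        apply LinearIndependent.of_comp V.subtype
        have : (⇑V.subtype ∘ vV) = v := funext fun i => rfl
        rwa [this]
      have := hvVR.fintype_card_le_finrank
      rwa [Fintype.card_fin, finrank_span_eq_card hwR, Fintype.card_fin] at this
    have hmltk : m < k := by
      rcases lt_or_eq_of_le hmk with h | h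
      · exact h
      · exfalso
        subst h
        have hex : ∀ j, ∃ d : Fin m → ℤ, ∑ i, d i • w i = v j := fun j =>
          (Submodule.mem_span_range_iff_exists_fun ℤ).mp (hvmem j)
        choose d hd using hex
        have hcomb : ∀ j, v j = ∑ i, (Matrix.of fun i j => d j i) i j • w i := by
          intro j
          rw [← hd j]
          rfl
        have hge := gramDet_comb_int w v (Matrix.of fun i j => d j i) hcomb hvR
        rw [show ((m:ℝ)/m) = 1 by field_simp, Real.rpow_one] at hlt
        exact absurd hge (not_le.mpr hlt)
    -- recurse on the denser sublattice spanned by v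
    have hsub : Submodule.span ℤ (Set.range v) ≤ Submodule.span ℤ (Set.range w) := by
      apply Submodule.span_le.mpr
      rintro x ⟨i, rfl⟩
      exact hvmem i
    have hamb' : ∀ (m' : ℕ) (v' : Fin m' → Euc n), LinearIndependent ℤ v' →
        (∀ i, v' i ∈ Submodule.span ℤ (Set.range v)) → LinearIndependent ℝ v' :=
      fun m' v' hZ hmem => hamb m' v' hZ (fun i => hsub (hmem i))
    obtain ⟨L', hle, hne, hb⟩ := IH m hmltk hm v hvR hamb'
    refine ⟨L', hle.trans hsub, hne, hb.trans ?_⟩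
    have step1 : gramDet v ^ ((1:ℝ)/m) ≤ gramDet w ^ ((1:ℝ)/k) := by
      have h1 : gramDet v ^ ((1:ℝ)/m) ≤ (gramDet w ^ ((m:ℝ)/k)) ^ ((1:ℝ)/m) :=
        Real.rpow_le_rpow hgv.le hlt.le (by positivity)
      rwa [← Real.rpow_mul hgw.le, show ((m:ℝ)/k) * ((1:ℝ)/m) = (1:ℝ)/k by
        field_simp] at h1
    have step2 : Real.logb 2 m ≤ Real.logb 2 k := by
      apply (Real.logb_le_logb one_lt_two (by positivity) (by positivity)).mpr
      exact_mod_cast hmltk.le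
    have h10 : (0:ℝ) ≤ 10 * (Real.logb 2 m + 2) := by
      have : (0:ℝ) ≤ Real.logb 2 m :=
        Real.logb_nonneg one_lt_two (by exact_mod_cast hm)
      linarith
    apply mul_le_mul _ step1 (Real.rpow_nonneg hgv.le _) _
    · linarith
    · have : (0:ℝ) ≤ Real.logb 2 k :=
        Real.logb_nonneg one_lt_two (by exact_mod_cast hk)
      linarith

end SSRM

theorem smooth_sublattice_from_reverse_minkowski
    (RM : ∀ (k : ℕ) (S : Submodule ℤ (Euc k)) (u : Fin k → Euc k),
      LinearIndependent ℝ u → IsLatticeBasis u S → gramDet u = 1 →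
      (∀ (m : ℕ) (w : Fin m → Euc k), 0 < m → LinearIndependent ℤ w →
        (∀ i, w i ∈ S) → 1 ≤ gramDet w) →
      eta (1/2) (S : Set (Euc k)) ≤ 10 * (Real.logb 2 k + 2))
    {n : ℕ} (hn : 0 < n) (L : Submodule ℤ (Euc n)) (b : Fin n → Euc n)
    (hbR : LinearIndependent ℝ b) (hbL : IsLatticeBasis b L) :
    ∃ L' : Submodule ℤ (Euc n), L' ≤ L ∧ L' ≠ ⊥ ∧
      eta (1/2) (L' : Set (Euc n)) ≤
        10 * (Real.logb 2 n + 2) * gramDet b ^ ((1 : ℝ) / n) := by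
  obtain ⟨hbZ, hbsp⟩ := hbL
  have hamb : ∀ (m : ℕ) (v : Fin m → Euc n), LinearIndependent ℤ v →
      (∀ i, v i ∈ Submodule.span ℤ (Set.range b)) → LinearIndependent ℝ v :=
    fun m v hZ hmem => SSRM.real_indep_of_int_indep hbR hZ hmem
  obtain ⟨L', hle, hne, hb⟩ := SSRM.key RM n hn b hbR hamb
  rw [hbsp] at hle
  exact ⟨L', hle, hne, hb⟩

end
end

section
/- Let $\vec{B} = (\vec{b}_1,\ldots,\vec{b}_{d+1})$ be a basis in $\mathbb{R}^m$ of a rank-$(d+1)$ lattice that is $\delta$-twin-reduced, i.e., $\|\vec{b}_1\| \le \delta\,\mathrm{vol}(\mathcal{L}(\vec{B}_{[1,d]}))^{1/d}$ and $\mathrm{vol}(\mathcal{L}(\vec{B}_{[2,d+1]}))^{1/d} \le \delta\|\vec{b}_{d+1}^*\|$. Then $\|\vec{b}_1\| \le \delta^{2d/(d-1)}\|\vec{b}_{d+1}^*\|$. -/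
open scoped BigOperators RealInnerProductSpace

noncomputable section

private lemma twin_aux (d : ℕ) (hd : 2 ≤ d) (B Q G δ : ℝ)
    (hB : 0 < B) (hQ : 0 < Q) (hG : 0 < G) (hδ0 : 0 < δ)
    (h1 : B ≤ δ * (B * Q) ^ ((1 : ℝ) / d))
    (h2 : (Q * G) ^ ((1 : ℝ) / d) ≤ δ * G) :
    B ≤ δ ^ ((2 * d : ℝ) / ((d : ℝ) - 1)) * G := by
  have hdpos : (0:ℝ) < d := by positivity
  have hd1 : (0:ℝ) < (d:ℝ) - 1 := by
    have : (2:ℝ) ≤ (d:ℝ) := by exact_mod_cast hd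
    linarith
  have h1' : B ^ (d:ℝ) ≤ δ ^ (d:ℝ) * (B * Q) := by
    calc B ^ (d:ℝ) ≤ (δ * (B * Q) ^ ((1:ℝ)/d)) ^ (d:ℝ) :=
          Real.rpow_le_rpow hB.le h1 hdpos.le
      _ = δ ^ (d:ℝ) * (B * Q) := by
          rw [Real.mul_rpow hδ0.le (Real.rpow_nonneg (by positivity) _),
            ← Real.rpow_mul (by positivity), one_div_mul_cancel hdpos.ne', Real.rpow_one]
  have h2' : Q * G ≤ δ ^ (d:ℝ) * G ^ (d:ℝ) := by
    calc Q * G = ((Q * G) ^ ((1:ℝ)/d)) ^ (d:ℝ) := by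
          rw [← Real.rpow_mul (by positivity), one_div_mul_cancel hdpos.ne', Real.rpow_one]
      _ ≤ (δ * G) ^ (d:ℝ) := Real.rpow_le_rpow (by positivity) h2 hdpos.le
      _ = δ ^ (d:ℝ) * G ^ (d:ℝ) := Real.mul_rpow hδ0.le hG.le
  have hQle : Q ≤ δ ^ (d:ℝ) * G ^ ((d:ℝ) - 1) := by
    have hGd : G ^ (d:ℝ) = G ^ ((d:ℝ) - 1) * G := by
      rw [← Real.rpow_add_one hG.ne' ((d:ℝ)-1), sub_add_cancel]
    rw [hGd, ← mul_assoc] at h2'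
    exact le_of_mul_le_mul_right h2' hG
  have key : B ^ ((d:ℝ) - 1) ≤ δ ^ (2*(d:ℝ)) * G ^ ((d:ℝ) - 1) := by
    have h3 : B ^ (d:ℝ) ≤ δ ^ (2*(d:ℝ)) * G ^ ((d:ℝ)-1) * B := by
      calc B ^ (d:ℝ) ≤ δ ^ (d:ℝ) * (B * Q) := h1'
        _ ≤ δ ^ (d:ℝ) * (B * (δ ^ (d:ℝ) * G ^ ((d:ℝ) - 1))) := by gcongr
        _ = δ ^ (2*(d:ℝ)) * G ^ ((d:ℝ)-1) * B := by
            rw [two_mul, Real.rpow_add hδ0]; ring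
    have hB' : B ^ (d:ℝ) = B ^ ((d:ℝ)-1) * B := by
      rw [← Real.rpow_add_one hB.ne' ((d:ℝ)-1), sub_add_cancel]
    rw [hB'] at h3
    exact le_of_mul_le_mul_right h3 hB
  calc B = (B ^ ((d:ℝ)-1)) ^ (1/((d:ℝ)-1)) := by
        rw [← Real.rpow_mul hB.le, mul_one_div_cancel hd1.ne', Real.rpow_one]
    _ ≤ (δ ^ (2*(d:ℝ)) * G ^ ((d:ℝ)-1)) ^ (1/((d:ℝ)-1)) :=
        Real.rpow_le_rpow (by positivity) key (by positivity)
    _ = δ ^ ((2 * d : ℝ) / ((d : ℝ) - 1)) * G := by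
        rw [Real.mul_rpow (by positivity) (by positivity),
          ← Real.rpow_mul hδ0.le, ← Real.rpow_mul hG.le,
          mul_one_div_cancel hd1.ne', Real.rpow_one, mul_one_div]

theorem twin_reduction {m d : ℕ} (hd : 2 ≤ d) (b : ℕ → Euc m)
    (hb : LinearIndependent ℝ (fun i : Fin (d + 1) => b i))
    (δ : ℝ) (hδ : 1 ≤ δ)
    (h1 : ‖b 0‖ ≤ δ * (∏ i ∈ Finset.range d, ‖InnerProductSpace.gramSchmidt ℝ b i‖) ^ ((1 : ℝ) / d))
    (h2 : (∏ i ∈ Finset.Icc 1 d, ‖InnerProductSpace.gramSchmidt ℝ b i‖) ^ ((1 : ℝ) / d) ≤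
      δ * ‖InnerProductSpace.gramSchmidt ℝ b d‖) :
    ‖b 0‖ ≤ δ ^ ((2 * d : ℝ) / ((d : ℝ) - 1)) * ‖InnerProductSpace.gramSchmidt ℝ b d‖ := by
  have hδ0 : (0:ℝ) < δ := lt_of_lt_of_le one_pos hδ
  have hgne : ∀ n : ℕ, n ≤ d → InnerProductSpace.gramSchmidt ℝ b n ≠ 0 := by
    intro n hn
    apply InnerProductSpace.gramSchmidt_ne_zero_coe
    have heq : (b ∘ ((↑) : Set.Iic n → ℕ)) =
        (fun i : Fin (d+1) => b i) ∘ (fun x : Set.Iic n => (⟨(x : ℕ), by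
          have := x.2; simp only [Set.mem_Iic] at this; omega⟩ : Fin (d+1))) := rfl
    rw [heq]
    exact hb.comp _ (fun x y h => Subtype.ext (by simpa [Fin.mk.injEq] using h))
  have hgpos : ∀ n : ℕ, n ≤ d → 0 < ‖InnerProductSpace.gramSchmidt ℝ b n‖ :=
    fun n hn => norm_pos_iff.mpr (hgne n hn)
  have hg0 : ‖InnerProductSpace.gramSchmidt ℝ b 0‖ = ‖b 0‖ := by
    rw [show (0:ℕ) = ⊥ from rfl, InnerProductSpace.gramSchmidt_bot]
  have hB : 0 < ‖b 0‖ := hg0 ▸ hgpos 0 (by omega)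
  have hG : 0 < ‖InnerProductSpace.gramSchmidt ℝ b d‖ := hgpos d le_rfl
  have hQpos : 0 < ∏ i ∈ Finset.Ico 1 d, ‖InnerProductSpace.gramSchmidt ℝ b i‖ :=
    Finset.prod_pos (fun i hi => hgpos i (by simp only [Finset.mem_Ico] at hi; omega))
  have hP1 : ∏ i ∈ Finset.range d, ‖InnerProductSpace.gramSchmidt ℝ b i‖ =
      ‖b 0‖ * ∏ i ∈ Finset.Ico 1 d, ‖InnerProductSpace.gramSchmidt ℝ b i‖ := by
    rw [Finset.range_eq_Ico, Finset.prod_eq_prod_Ico_succ_bot (by omega : 0 < d), hg0]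
  have hP2 : ∏ i ∈ Finset.Icc 1 d, ‖InnerProductSpace.gramSchmidt ℝ b i‖ =
      (∏ i ∈ Finset.Ico 1 d, ‖InnerProductSpace.gramSchmidt ℝ b i‖) * ‖InnerProductSpace.gramSchmidt ℝ b d‖ := by
    rw [← Finset.Ico_add_one_right_eq_Icc, Finset.prod_Ico_succ_top (by omega : 1 ≤ d)]
  rw [hP1] at h1
  rw [hP2] at h2
  exact twin_aux d hd _ _ _ δ hB hQpos hG hδ0 h1 h2
end
end

section
/- Let $n = pk + q + \ell$ with $p \ge 1$, $k,\ell \ge 2$, $0 \le q \le k-1$, and let $\delta_H, \delta_S \ge 1$. Let $\vec{B} \in \mathbb{R}^{n\times n}$ be a $(\delta_H, k, \delta_S, \ell)$-slide-reduced basis of a lattice $\mathcal{L}$, and suppose $\lambda_1(\mathcal{L}(\vec{B}_{[1,n-\ell]})) > \lambda_1(\mathcal{L})$. Then $\|\vec{b}_1\| \le \delta_S\,(\delta_H^2)^{(n-\ell)/(k-1)}\,\lambda_1(\mathcal{L})$. -/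
open scoped BigOperators RealInnerProductSpace

noncomputable section

/-- The block `(π_a(b_a), …, π_a(b_{a+d}))` is `δ`-twin-reduced: its first vector is
`δ`-HSVP-reduced and its last `d` vectors are `δ`-DHSVP-reduced (expressed via the
Gram-Schmidt norms, since the block volumes are products of Gram-Schmidt norms). -/
def TwinReduced {n : ℕ} (b : ℕ → Euc n) (a d : ℕ) (δ : ℝ) : Prop :=
  ‖InnerProductSpace.gramSchmidt ℝ b a‖ ≤ δ * (∏ i ∈ Finset.Ico a (a + d), ‖InnerProductSpace.gramSchmidt ℝ b i‖) ^ ((1 : ℝ) / d) ∧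
  (∏ i ∈ Finset.Ico (a + 1) (a + d + 1), ‖InnerProductSpace.gramSchmidt ℝ b i‖) ^ ((1 : ℝ) / d) ≤
    δ * ‖InnerProductSpace.gramSchmidt ℝ b (a + d)‖


lemma twin_log {n : ℕ} (b : ℕ → Euc n) (a d : ℕ) (δ : ℝ) (hδ : 0 < δ) (hd : 2 ≤ d)
    (hpos : ∀ i, i ≤ a + d → 0 < ‖InnerProductSpace.gramSchmidt ℝ b i‖)
    (h : TwinReduced b a d δ) :
    Real.log ‖InnerProductSpace.gramSchmidt ℝ b a‖ ≤
      (2 * (d : ℝ) / ((d : ℝ) - 1)) * Real.log δ + Real.log ‖InnerProductSpace.gramSchmidt ℝ b (a + d)‖ := by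
  obtain ⟨h1, h2⟩ := h
  set x : ℕ → ℝ := fun i => ‖InnerProductSpace.gramSchmidt ℝ b i‖ with hx
  have hD1 : (1 : ℝ) < (d : ℝ) := by exact_mod_cast hd.trans_lt' one_lt_two
  have hD0 : (0 : ℝ) < (d : ℝ) := by positivity
  have hD1' : (0 : ℝ) < (d : ℝ) - 1 := by linarith
  have hP1 : 0 < ∏ i ∈ Finset.Ico a (a + d), x i :=
    Finset.prod_pos fun i hi => hpos i (by have := (Finset.mem_Ico.mp hi).2; omega)
  have hP2 : 0 < ∏ i ∈ Finset.Ico (a + 1) (a + d + 1), x i :=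
    Finset.prod_pos fun i hi => hpos i (by have := (Finset.mem_Ico.mp hi).2; omega)
  have l1 : Real.log (x a) ≤ Real.log δ +
      (1 / (d : ℝ)) * Real.log (∏ i ∈ Finset.Ico a (a + d), x i) := by
    have := Real.log_le_log (hpos a (by omega)) h1
    rwa [Real.log_mul (ne_of_gt hδ) (ne_of_gt (Real.rpow_pos_of_pos hP1 _)),
      Real.log_rpow hP1] at this
  have l2 : (1 / (d : ℝ)) * Real.log (∏ i ∈ Finset.Ico (a + 1) (a + d + 1), x i) ≤
      Real.log δ + Real.log (x (a + d)) := by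
    have := Real.log_le_log (Real.rpow_pos_of_pos hP2 _) h2
    rwa [Real.log_mul (ne_of_gt hδ) (ne_of_gt (hpos (a + d) le_rfl)),
      Real.log_rpow hP2] at this
  rw [Real.log_prod
    (fun i hi => ne_of_gt (hpos i (by have := (Finset.mem_Ico.mp hi).2; omega)))] at l1
  rw [Real.log_prod
    (fun i hi => ne_of_gt (hpos i (by have := (Finset.mem_Ico.mp hi).2; omega)))] at l2
  rw [Finset.sum_eq_sum_Ico_succ_bot (by omega : a < a + d)] at l1
  rw [show a + d + 1 = (a + d) + 1 from rfl,
    Finset.sum_Ico_succ_top (by omega : a + 1 ≤ a + d)] at l2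
  set S := ∑ i ∈ Finset.Ico (a + 1) (a + d), Real.log (x i) with hS
  set la := Real.log (x a)
  set lb := Real.log (x (a + d))
  set Lδ := Real.log δ
  set D := (d : ℝ)
  have e1 : (la - Lδ) * D ≤ la + S := by
    rw [← le_div_iff₀ hD0]
    have heq : (la + S) / D = 1 / D * (la + S) := by ring
    rw [heq]; linarith
  have e2 : S + lb ≤ (Lδ + lb) * D := by
    rw [← div_le_iff₀ hD0]
    have heq : (S + lb) / D = 1 / D * (S + lb) := by ring
    rw [heq]; linarith
  rw [div_mul_eq_mul_div, ← sub_le_iff_le_add, le_div_iff₀ hD1']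
  nlinarith [e1, e2]

lemma image_Iio_eq_range {n t : ℕ} (b : ℕ → Euc n) :
    b '' Set.Iio t = Set.range (fun i : Fin t => b i) := by
  ext y
  constructor
  · rintro ⟨i, hi, rfl⟩; exact ⟨⟨i, hi⟩, rfl⟩
  · rintro ⟨i, rfl⟩; exact ⟨i, i.isLt, rfl⟩

lemma span_int_of_span_real {n m : ℕ} (hm : m ≤ n) (b : ℕ → Euc n)
    (hb : LinearIndependent ℝ (fun i : Fin n => b i)) (v : Euc n)
    (hvL : v ∈ Submodule.span ℤ (b '' Set.Iio n))
    (hvK : v ∈ Submodule.span ℝ (b '' Set.Iio m)) :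
    v ∈ Submodule.span ℤ (b '' Set.Iio m) := by
  rw [image_Iio_eq_range] at hvL hvK
  obtain ⟨c, hc⟩ := (Submodule.mem_span_range_iff_exists_fun ℤ).mp hvL
  obtain ⟨e, he⟩ := (Submodule.mem_span_range_iff_exists_fun ℝ).mp hvK
  set cN : ℕ → ℤ := fun i => if h : i < n then c ⟨i, h⟩ else 0 with hcN
  set eN : ℕ → ℝ := fun i => if h : i < m then e ⟨i, h⟩ else 0 with heN
  have hc' : ∑ i ∈ Finset.range n, (cN i : ℝ) • b i = v := by
    rw [← hc, ← Fin.sum_univ_eq_sum_range (fun i => (cN i : ℝ) • b i) n]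
    refine Finset.sum_congr rfl fun i _ => ?_
    simp only [hcN, i.isLt, dif_pos, Fin.eta, Int.cast_smul_eq_zsmul]
  have hcZ : ∑ i ∈ Finset.range n, cN i • b i = v := by
    rw [← hc, ← Fin.sum_univ_eq_sum_range (fun i => cN i • b i) n]
    refine Finset.sum_congr rfl fun i _ => ?_
    simp only [hcN, i.isLt, dif_pos, Fin.eta]
  have he' : ∑ i ∈ Finset.range m, eN i • b i = v := by
    rw [← he, ← Fin.sum_univ_eq_sum_range (fun i => eN i • b i) m]
    refine Finset.sum_congr rfl fun i _ => ?_
    simp only [heN, i.isLt, dif_pos, Fin.eta]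
  have hss : ∑ i ∈ Finset.range n, (if i < m then eN i else 0) • b i
      = ∑ i ∈ Finset.range m, eN i • b i := by
    rw [← Finset.sum_subset (Finset.range_subset_range.mpr hm)
      (fun x _ hx => by rw [if_neg (by simpa using hx), zero_smul])]
    exact Finset.sum_congr rfl fun i hi => by rw [if_pos (Finset.mem_range.mp hi)]
  have hsum0 : ∑ i ∈ Finset.range n,
      ((cN i : ℝ) - if i < m then eN i else 0) • b i = 0 := by
    simp only [sub_smul]
    rw [Finset.sum_sub_distrib, hc', hss, he', sub_self]
  have hg : ∀ i : Fin n, ((cN (i : ℕ) : ℝ) - if (i : ℕ) < m then eN i else 0) = 0 := by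
    apply Fintype.linearIndependent_iff.mp hb
    rw [Fin.sum_univ_eq_sum_range (fun i => ((cN i : ℝ) - if i < m then eN i else 0) • b i) n]
    exact hsum0
  have hczero : ∀ i, m ≤ i → i < n → cN i = 0 := by
    intro i h1 h2
    have := hg ⟨i, h2⟩
    rw [if_neg (not_lt.mpr h1), sub_zero] at this
    exact_mod_cast this
  have hveq : v = ∑ i ∈ Finset.range m, cN i • b i := by
    rw [← hcZ]
    exact (Finset.sum_subset (Finset.range_subset_range.mpr hm)
      (fun x hx hx2 => by
        rw [hczero x (by simpa using hx2) (Finset.mem_range.mp hx), zero_smul])).symm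
  rw [hveq]
  exact Submodule.sum_mem _ fun i hi =>
    Submodule.smul_mem _ _ (Submodule.subset_span ⟨i, Finset.mem_range.mp hi, rfl⟩)

set_option maxHeartbeats 2000000 in
theorem slide_reduced_svp {n p k q ℓ : ℕ}
    (hn : n = p * k + q + ℓ) (hp : 1 ≤ p) (hk : 2 ≤ k) (hℓ : 2 ≤ ℓ) (hq : q ≤ k - 1)
    (δH δS : ℝ) (hδH : 1 ≤ δH) (hδS : 1 ≤ δS)
    (b : ℕ → Euc n) (hb : LinearIndependent ℝ (fun i : Fin n => b i))
    (L : Submodule ℤ (Euc n)) (hL : L = Submodule.span ℤ (b '' Set.Iio n))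
    -- (1) the first block is η-twin-reduced with η = δH^((k+q-1)/(k-1))
    (hfirst : TwinReduced b 0 (k + q) (δH ^ (((k : ℝ) + q - 1) / ((k : ℝ) - 1))))
    -- (2) the intermediate blocks are δH-twin-reduced
    (hmid : ∀ i, 1 ≤ i → i ≤ p - 1 → TwinReduced b (i * k + q) k δH)
    -- (3) the last block is δS-SVP-reduced
    (hlast : ‖InnerProductSpace.gramSchmidt ℝ b (p * k + q)‖ ≤ δS *
      lambdaOne ((fun x => x -
        (Submodule.orthogonalProjectionOnto (Submodule.span ℝ (b '' Set.Iio (p * k + q))) x : Euc n)) ''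
          (L : Set (Euc n))))
    (hgap : lambdaOne (L : Set (Euc n)) <
      lambdaOne ((Submodule.span ℤ (b '' Set.Iio (n - ℓ)) : Submodule ℤ (Euc n)) : Set (Euc n))) :
    ‖b 0‖ ≤ δS * (δH ^ 2) ^ ((((n : ℝ) - ℓ)) / ((k : ℝ) - 1)) * lambdaOne (L : Set (Euc n)) := by

  -- basic positivity facts
  have hδH0 : (0 : ℝ) < δH := lt_of_lt_of_le one_pos hδH
  have hkpk : k ≤ p * k := Nat.le_mul_of_pos_left k hp
  have hmn : p * k + q < n := by omega
  have hn0 : 0 < n := by omega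
  have hk1 : (0 : ℝ) < (k : ℝ) - 1 := by
    have : (2 : ℝ) ≤ (k : ℝ) := by exact_mod_cast hk
    linarith
  have hk1' : ((k : ℝ) - 1) ≠ 0 := ne_of_gt hk1
  have hgpos : ∀ i, i < n → 0 < ‖InnerProductSpace.gramSchmidt ℝ b i‖ := by
    intro i hi
    have hne : InnerProductSpace.gramSchmidt ℝ b i ≠ 0 := by
      apply InnerProductSpace.gramSchmidt_ne_zero_coe (𝕜 := ℝ) i
      have hinj : Function.Injective
          (fun j : Set.Iic i => (⟨(j : ℕ), lt_of_le_of_lt j.2 hi⟩ : Fin n)) := by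
        intro a₁ a₂ hab
        exact Subtype.ext (congrArg Fin.val hab)
      exact hb.comp _ hinj
    exact norm_pos_iff.mpr hne
  -- Step A : the first block
  have hkq2 : 2 ≤ k + q := by omega
  have hfa := twin_log b 0 (k + q) _ (Real.rpow_pos_of_pos hδH0 _) hkq2
    (fun i hi => hgpos i (by omega)) hfirst
  rw [Real.log_rpow hδH0] at hfa
  simp only [zero_add] at hfa
  push_cast at hfa
  have hA : Real.log ‖InnerProductSpace.gramSchmidt ℝ b 0‖ ≤
      (2 * ((k : ℝ) + q) / ((k : ℝ) - 1)) * Real.log δH +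
        Real.log ‖InnerProductSpace.gramSchmidt ℝ b (k + q)‖ := by
    refine hfa.trans (le_of_eq ?_)
    have hkq1 : (0 : ℝ) < (k : ℝ) + (q : ℝ) - 1 := by
      have h2 : (2 : ℝ) ≤ (k : ℝ) := by exact_mod_cast hk
      have := Nat.cast_nonneg (α := ℝ) q
      linarith
    have hkq1' : ((k : ℝ) + (q : ℝ) - 1) ≠ 0 := ne_of_gt hkq1
    field_simp
  -- Step B : chaining the middle blocks
  have hchain : ∀ j : ℕ, j ≤ p - 1 →
      Real.log ‖InnerProductSpace.gramSchmidt ℝ b (k + q)‖ ≤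
        ((j : ℝ) * (2 * (k : ℝ) / ((k : ℝ) - 1))) * Real.log δH +
          Real.log ‖InnerProductSpace.gramSchmidt ℝ b ((j + 1) * k + q)‖ := by
    intro j
    induction j with
    | zero => intro _; simp
    | succ j ih =>
      intro hj
      have hj' : j ≤ p - 1 := by omega
      have h2p : j + 1 + 1 ≤ p := by omega
      have hle : (j + 1 + 1) * k ≤ p * k := Nat.mul_le_mul_right k h2p
      have step := twin_log b ((j + 1) * k + q) k δH hδH0 hk
        (fun i hi => hgpos i (by
          have : (j + 1) * k + q + k = (j + 1 + 1) * k + q := by ring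
          omega)) (hmid (j + 1) (by omega) hj)
      rw [show (j + 1) * k + q + k = (j + 1 + 1) * k + q from by ring] at step
      calc Real.log ‖InnerProductSpace.gramSchmidt ℝ b (k + q)‖
          ≤ ((j : ℝ) * (2 * (k : ℝ) / ((k : ℝ) - 1))) * Real.log δH +
            Real.log ‖InnerProductSpace.gramSchmidt ℝ b ((j + 1) * k + q)‖ := ih hj'
        _ ≤ ((j : ℝ) * (2 * (k : ℝ) / ((k : ℝ) - 1))) * Real.log δH +
            ((2 * (k : ℝ) / ((k : ℝ) - 1)) * Real.log δH +
              Real.log ‖InnerProductSpace.gramSchmidt ℝ b ((j + 1 + 1) * k + q)‖) := by linarith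
        _ = (((j + 1 : ℕ) : ℝ) * (2 * (k : ℝ) / ((k : ℝ) - 1))) * Real.log δH +
            Real.log ‖InnerProductSpace.gramSchmidt ℝ b ((j + 1 + 1) * k + q)‖ := by push_cast; ring
  have hchain' := hchain (p - 1) le_rfl
  rw [show p - 1 + 1 = p from by omega] at hchain'
  have hPm1 : ((p - 1 : ℕ) : ℝ) = (p : ℝ) - 1 := by
    have := Nat.cast_sub (R := ℝ) hp
    simpa using this
  -- Step C : total log bound
  have hfinal : Real.log ‖InnerProductSpace.gramSchmidt ℝ b 0‖ ≤
      (2 * ((p : ℝ) * k + q) / ((k : ℝ) - 1)) * Real.log δH +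
        Real.log ‖InnerProductSpace.gramSchmidt ℝ b (p * k + q)‖ :=
    calc Real.log ‖InnerProductSpace.gramSchmidt ℝ b 0‖
        ≤ (2 * ((k : ℝ) + q) / ((k : ℝ) - 1)) * Real.log δH +
          Real.log ‖InnerProductSpace.gramSchmidt ℝ b (k + q)‖ := hA
      _ ≤ (2 * ((k : ℝ) + q) / ((k : ℝ) - 1)) * Real.log δH +
          ((((p - 1 : ℕ) : ℝ) * (2 * (k : ℝ) / ((k : ℝ) - 1))) * Real.log δH +
            Real.log ‖InnerProductSpace.gramSchmidt ℝ b (p * k + q)‖) := by linarith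
      _ = (2 * ((p : ℝ) * k + q) / ((k : ℝ) - 1)) * Real.log δH +
          Real.log ‖InnerProductSpace.gramSchmidt ℝ b (p * k + q)‖ := by
            rw [hPm1]; field_simp; ring
  -- Step D : exponentiate
  set E : ℝ := (δH ^ 2) ^ ((((n : ℝ) - ℓ)) / ((k : ℝ) - 1)) with hE
  have hE0 : 0 < E := Real.rpow_pos_of_pos (by positivity) _
  have hlogE : Real.log E = (2 * ((p : ℝ) * k + q) / ((k : ℝ) - 1)) * Real.log δH := by
    rw [hE, Real.log_rpow (by positivity), Real.log_pow]
    have hnl : (n : ℝ) - ℓ = (p : ℝ) * k + q := by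
      rw [hn]; push_cast; ring
    rw [hnl]; push_cast; ring
  have hD : ‖InnerProductSpace.gramSchmidt ℝ b 0‖ ≤ E * ‖InnerProductSpace.gramSchmidt ℝ b (p * k + q)‖ := by
    have h1 : Real.log ‖InnerProductSpace.gramSchmidt ℝ b 0‖ ≤
        Real.log (E * ‖InnerProductSpace.gramSchmidt ℝ b (p * k + q)‖) := by
      rw [Real.log_mul (ne_of_gt hE0) (ne_of_gt (hgpos _ hmn)), hlogE]
      exact hfinal
    calc ‖InnerProductSpace.gramSchmidt ℝ b 0‖
        = Real.exp (Real.log ‖InnerProductSpace.gramSchmidt ℝ b 0‖) :=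
          (Real.exp_log (hgpos 0 (by omega))).symm
      _ ≤ Real.exp (Real.log (E * ‖InnerProductSpace.gramSchmidt ℝ b (p * k + q)‖)) :=
          Real.exp_le_exp.mpr h1
      _ = E * ‖InnerProductSpace.gramSchmidt ℝ b (p * k + q)‖ :=
          Real.exp_log (mul_pos hE0 (hgpos _ hmn))
  -- Step F : the projected lattice minimum is at most λ₁(L)
  set K : Submodule ℝ (Euc n) := Submodule.span ℝ (b '' Set.Iio (p * k + q)) with hK
  have hproj_le : ∀ w : Euc n, ‖w - (Submodule.orthogonalProjectionOnto K w : Euc n)‖ ≤ ‖w‖ := by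
    intro w
    have h2 : ‖Submodule.orthogonalProjectionOnto Kᗮ‖ ≤ 1 := Submodule.orthogonalProjectionOnto_norm_le _
    have h3 := (Submodule.orthogonalProjectionOnto Kᗮ).le_opNorm w
    have h1 : ‖Submodule.orthogonalProjectionOnto Kᗮ w‖ ≤ ‖w‖ :=
      h3.trans ((mul_le_mul_of_nonneg_right h2 (norm_nonneg w)).trans_eq (one_mul _))
    calc ‖w - (Submodule.orthogonalProjectionOnto K w : Euc n)‖
        = ‖(Submodule.orthogonalProjectionOnto Kᗮ w : Euc n)‖ := by rw [Submodule.orthogonalProjectionOnto_orthogonal]; rfl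
      _ = ‖Submodule.orthogonalProjectionOnto Kᗮ w‖ := (Submodule.coe_norm _).symm
      _ ≤ ‖w‖ := h1
  have hb0 : b 0 ≠ 0 := hb.ne_zero ⟨0, hn0⟩
  have hb0L : b 0 ∈ L := by
    rw [hL]; exact Submodule.subset_span ⟨0, Set.mem_Iio.mpr hn0, rfl⟩
  have hbddL : BddBelow {r : ℝ | ∃ x ∈ (L : Set (Euc n)), x ≠ 0 ∧ ‖x‖ = r} :=
    ⟨0, by rintro r ⟨x, -, -, rfl⟩; exact norm_nonneg x⟩
  have hneL : Set.Nonempty {r : ℝ | ∃ x ∈ (L : Set (Euc n)), x ≠ 0 ∧ ‖x‖ = r} :=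
    ⟨‖b 0‖, b 0, hb0L, hb0, rfl⟩
  rw [show n - ℓ = p * k + q from by omega] at hgap
  have hF : lambdaOne ((fun x => x - (Submodule.orthogonalProjectionOnto K x : Euc n)) ''
      (L : Set (Euc n))) ≤ lambdaOne (L : Set (Euc n)) := by
    unfold lambdaOne at hgap ⊢
    refine le_of_forall_pos_le_add fun ε hε => ?_
    have hlt : sInf {r : ℝ | ∃ x ∈ (L : Set (Euc n)), x ≠ 0 ∧ ‖x‖ = r} <
        min (sInf {r : ℝ | ∃ x ∈ (L : Set (Euc n)), x ≠ 0 ∧ ‖x‖ = r} + ε)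
          (sInf {r : ℝ | ∃ x ∈ ((Submodule.span ℤ (b '' Set.Iio (p * k + q)) :
            Submodule ℤ (Euc n)) : Set (Euc n)), x ≠ 0 ∧ ‖x‖ = r}) :=
      lt_min (lt_add_of_pos_right _ hε) hgap
    obtain ⟨r, ⟨v, hvL, hv0, rfl⟩, hr⟩ := (csInf_lt_iff hbddL hneL).mp hlt
    have hvnot : v ∉ Submodule.span ℤ (b '' Set.Iio (p * k + q)) := by
      intro hmem
      have hle : sInf {r : ℝ | ∃ x ∈ ((Submodule.span ℤ (b '' Set.Iio (p * k + q)) :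
          Submodule ℤ (Euc n)) : Set (Euc n)), x ≠ 0 ∧ ‖x‖ = r} ≤ ‖v‖ :=
        csInf_le ⟨0, by rintro r ⟨x, -, -, rfl⟩; exact norm_nonneg x⟩ ⟨v, hmem, hv0, rfl⟩
      have := hr.trans_le (min_le_right _ _)
      linarith
    have hπv : v - (Submodule.orthogonalProjectionOnto K v : Euc n) ≠ 0 := by
      intro h0
      apply hvnot
      apply span_int_of_span_real (le_of_lt hmn) b hb v (hL ▸ hvL)
      rw [sub_eq_zero] at h0
      rw [h0]
      exact SetLike.coe_mem _
    calc sInf {r : ℝ | ∃ x ∈ ((fun x => x - (Submodule.orthogonalProjectionOnto K x : Euc n)) ''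
          (L : Set (Euc n))), x ≠ 0 ∧ ‖x‖ = r}
        ≤ ‖v - (Submodule.orthogonalProjectionOnto K v : Euc n)‖ :=
          csInf_le ⟨0, by rintro r ⟨x, -, -, rfl⟩; exact norm_nonneg x⟩
            ⟨v - (Submodule.orthogonalProjectionOnto K v : Euc n), ⟨v, hvL, rfl⟩, hπv, rfl⟩
      _ ≤ ‖v‖ := hproj_le v
      _ ≤ sInf {r : ℝ | ∃ x ∈ (L : Set (Euc n)), x ≠ 0 ∧ ‖x‖ = r} + ε :=
          (hr.trans_le (min_le_left _ _)).le
  -- put everything together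
  have hlamzero : 0 ≤ lambdaOne (L : Set (Euc n)) := by
    unfold lambdaOne
    exact Real.sInf_nonneg (by rintro r ⟨x, -, -, rfl⟩; exact norm_nonneg x)
  have hgs0 : InnerProductSpace.gramSchmidt ℝ b 0 = b 0 := InnerProductSpace.gramSchmidt_bot (𝕜 := ℝ) b
  calc ‖b 0‖ = ‖InnerProductSpace.gramSchmidt ℝ b 0‖ := by rw [hgs0]
    _ ≤ E * ‖InnerProductSpace.gramSchmidt ℝ b (p * k + q)‖ := hD
    _ ≤ E * (δS * lambdaOne ((fun x => x - (Submodule.orthogonalProjectionOnto K x : Euc n)) ''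
          (L : Set (Euc n)))) := mul_le_mul_of_nonneg_left hlast hE0.le
    _ ≤ (E * δS) * lambdaOne (L : Set (Euc n)) := by
        have h1 : 0 ≤ E * δS := by positivity
        calc E * (δS * lambdaOne ((fun x => x - (Submodule.orthogonalProjectionOnto K x : Euc n)) ''
              (L : Set (Euc n))))
            = (E * δS) * lambdaOne ((fun x => x - (Submodule.orthogonalProjectionOnto K x : Euc n)) ''
              (L : Set (Euc n))) := by ring
          _ ≤ (E * δS) * lambdaOne (L : Set (Euc n)) := mul_le_mul_of_nonneg_left hF h1
    _ = δS * E * lambdaOne (L : Set (Euc n)) := by ring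
end
end

section
/- Let $\mathcal{L}$ be a lattice of rank $n$ given by a basis $(\vec{b}_1,\ldots,\vec{b}_n)$, where the construction of Theorem 4.6 defines, for integers $\ell \ge 1$ and $n/2 \le \alpha \le n$, lattices $\mathcal{L}_\ell = \mathcal{L}$ and $\mathcal{L}_{i}$ obtained by cyclically halving $\alpha$ coordinates at each step (e.g., $\mathcal{L}_{\ell-1}$ is generated by $\vec{b}_1/2,\ldots,\vec{b}_\alpha/2,\vec{b}_{\alpha+1},\ldots,\vec{b}_n$). Then $(\mathcal{L}_0,\ldots,\mathcal{L}_\ell)$ is a tower of lattices of index $2^\alpha$: for all $i \ge 1$, $2\mathcal{L}_{i-1} \subseteq \mathcal{L}_i \subsetneq \mathcal{L}_{i-1}$, $|\mathcal{L}_{i-1}/\mathcal{L}_i| = 2^\alpha$, $\mathcal{L}_i/2 \subseteq \mathcal{L}_{i-2}$ (for $i \ge 2$), and $2^{\lceil i\alpha/n\rceil}\mathcal{L}_0 \subseteq \mathcal{L}_i \subseteq 2^{\lfloor i\alpha/n\rfloor}\mathcal{L}_0$. -/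
open scoped BigOperators RealInnerProductSpace

noncomputable section

def eexp (n m s : ℕ) : ℕ := m / n + if s < m % n then 1 else 0

section aux
variable {n : ℕ}

lemma eexp_succ_le (hn : 0 < n) (m s : ℕ) : eexp n m s ≤ eexp n (m + 1) s := by
  unfold eexp
  rcases Nat.lt_or_ge (m % n + 1) n with h | h
  · have h1 : (m + 1) % n = m % n + 1 := by
      conv_lhs => rw [← Nat.div_add_mod m n]
      rw [Nat.add_assoc, Nat.mul_add_mod, Nat.mod_eq_of_lt h]
    have h2 : (m + 1) / n = m / n := by
      conv_lhs => rw [← Nat.div_add_mod m n]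
      rw [Nat.add_assoc, Nat.mul_add_div hn, Nat.div_eq_of_lt h, Nat.add_zero]
    rw [h1, h2]
    split <;> split <;> omega
  · have hmn : m % n < n := Nat.mod_lt _ hn
    have h' : m % n + 1 = n := by omega
    have h2 : (m + 1) / n = m / n + 1 := by
      conv_lhs => rw [← Nat.div_add_mod m n]
      rw [Nat.add_assoc, h', Nat.mul_add_div hn, Nat.div_self hn]
    rw [h2]
    split <;> omega

lemma eexp_mono (hn : 0 < n) (s : ℕ) : Monotone (fun m => eexp n m s) :=
  monotone_nat_of_le_succ fun m => eexp_succ_le hn m s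

lemma eexp_add_n (hn : 0 < n) (m s : ℕ) : eexp n (m + n) s = eexp n m s + 1 := by
  unfold eexp
  rw [Nat.add_div_right _ hn, Nat.add_mod_right]
  omega

lemma eexp_add_mul_n (hn : 0 < n) (m q s : ℕ) :
    eexp n (m + q * n) s = eexp n m s + q := by
  induction q with
  | zero => simp
  | succ q ih => rw [Nat.succ_mul, ← Nat.add_assoc, eexp_add_n hn, ih]; omega

lemma sum_eexp (hn : 0 < n) (m : ℕ) : ∑ s : Fin n, eexp n m (s : ℕ) = m := by
  unfold eexp
  rw [Finset.sum_add_distrib, Finset.sum_const, Finset.card_univ, Fintype.card_fin]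
  have h1 : ∑ s : Fin n, (if (s : ℕ) < m % n then 1 else 0) = m % n := by
    rw [Fin.sum_univ_eq_sum_range (fun k => if k < m % n then 1 else 0) n,
      ← Finset.card_filter]
    have h2 : (Finset.range n).filter (fun i => i < m % n) = Finset.range (m % n) := by
      have := Nat.mod_lt m hn
      ext i
      simp only [Finset.mem_filter, Finset.mem_range]
      omega
    rw [h2, Finset.card_range]
  rw [h1, smul_eq_mul]
  have := Nat.div_add_mod m n
  omega

lemma ceil_mul_le (hn : 0 < n) (k : ℕ) : k ≤ ((k + n - 1) / n) * n := by
  rcases Nat.eq_zero_or_pos k with rfl | hk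
  · simp
  have h1 : k + n - 1 = (k - 1) + n := by omega
  rw [h1, Nat.add_div_right _ hn, Nat.succ_mul]
  have := Nat.div_add_mod (k - 1) n
  have := Nat.mod_lt (k - 1) hn
  have h2 : (k - 1) / n * n = n * ((k - 1) / n) := Nat.mul_comm _ _
  omega

end aux

set_option maxHeartbeats 1000000 in
theorem tower_construction {n : ℕ} (hn : 0 < n) (ℓ α : ℕ) (hℓ : 1 ≤ ℓ)
    (hα1 : n ≤ 2 * α) (hα2 : α ≤ n)
    (b : Fin n → Euc n) (hb : LinearIndependent ℝ b)
    (𝓛 : ℕ → Submodule ℤ (Euc n))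
    (hdef : ∀ i ≤ ℓ, 𝓛 i = Submodule.span ℤ (Set.range (fun s : Fin n =>
      (((2 : ℝ) ^ ((ℓ - i) * α / n + if (s : ℕ) < (ℓ - i) * α % n then 1 else 0))⁻¹) • b s))) :
    𝓛 ℓ = Submodule.span ℤ (Set.range b) ∧
    ∀ i, 1 ≤ i → i ≤ ℓ →
      (∀ x ∈ 𝓛 (i - 1), (2 : ℝ) • x ∈ 𝓛 i) ∧
      𝓛 i ≤ 𝓛 (i - 1) ∧ 𝓛 i ≠ 𝓛 (i - 1) ∧
      Nat.card (↥(𝓛 (i - 1)) ⧸ Submodule.comap (𝓛 (i - 1)).subtype (𝓛 i)) = 2 ^ α ∧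
      (2 ≤ i → ∀ x ∈ 𝓛 i, (2 : ℝ)⁻¹ • x ∈ 𝓛 (i - 2)) ∧
      (∀ x ∈ 𝓛 0, ((2 : ℝ) ^ ((i * α + n - 1) / n : ℕ)) • x ∈ 𝓛 i) ∧
      (∀ x ∈ 𝓛 i, ∃ y ∈ 𝓛 0, x = ((2 : ℝ) ^ (i * α / n : ℕ)) • y) := by
  classical
  set v : ℕ → Fin n → Euc n := fun j s => ((2 : ℝ) ^ eexp n (j * α) (s : ℕ))⁻¹ • b s with hv
  have hLdef : ∀ i ≤ ℓ, 𝓛 i = Submodule.span ℤ (Set.range (v (ℓ - i))) := by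
    intro i hi
    rw [hdef i hi]
    rfl
  -- key membership transfer lemma
  have hkey : ∀ (t u j j' : ℕ),
      (∀ s : Fin n, u + eexp n (j' * α) (s : ℕ) ≤ t + eexp n (j * α) (s : ℕ)) →
      ∀ x ∈ Submodule.span ℤ (Set.range (v j')),
        ((2 : ℝ) ^ t * ((2 : ℝ) ^ u)⁻¹) • x ∈ Submodule.span ℤ (Set.range (v j)) := by
    intro t u j j' h x hx
    set c : ℝ := (2 : ℝ) ^ t * ((2 : ℝ) ^ u)⁻¹ with hc
    let f : Euc n →ₗ[ℤ] Euc n := (LinearMap.lsmul ℝ (Euc n) c).restrictScalars ℤ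
    have hfx : f x ∈ Submodule.map f (Submodule.span ℤ (Set.range (v j'))) :=
      Submodule.mem_map_of_mem hx
    rw [Submodule.map_span] at hfx
    have hle : Submodule.span ℤ (⇑f '' Set.range (v j')) ≤ Submodule.span ℤ (Set.range (v j)) := by
      rw [Submodule.span_le]
      rintro _ ⟨_, ⟨s, rfl⟩, rfl⟩
      have hs := h s
      set m : ℕ := t + eexp n (j * α) (s : ℕ) - (u + eexp n (j' * α) (s : ℕ)) with hm
      have h2 : (2 : ℝ) ≠ 0 := two_ne_zero
      have hpow : c * ((2 : ℝ) ^ eexp n (j' * α) (s : ℕ))⁻¹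
          = ((2 : ℝ) ^ m) * ((2 : ℝ) ^ eexp n (j * α) (s : ℕ))⁻¹ := by
        rw [hc]
        field_simp
        rw [← pow_add, ← pow_add, ← pow_add]
        congr 1
        omega
      have heq : f (v j' s) = ((2 ^ m : ℤ) : ℝ) • v j s := by
        show c • v j' s = _
        rw [hv]
        simp only [smul_smul]
        rw [hpow]
        push_cast
        ring_nf
      have : f (v j' s) ∈ Submodule.span ℤ (Set.range (v j)) := by
        rw [heq, Int.cast_smul_eq_zsmul]
        exact Submodule.smul_mem _ _ (Submodule.subset_span ⟨s, rfl⟩)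
      exact this
    exact hle hfx
  -- real coefficient extraction
  have hcoefR : ∀ (f g : Fin n → ℝ), ∑ s, f s • b s = ∑ s, g s • b s → ∀ s, f s = g s := by
    intro f g hfg s
    have h0 : ∑ s, (f - g) s • b s = 0 := by
      simp only [Pi.sub_apply, sub_smul, Finset.sum_sub_distrib, hfg, sub_self]
    have := Fintype.linearIndependent_iff.1 hb (f - g) h0 s
    simpa [sub_eq_zero] using this
  have hα0 : 1 ≤ α := by omega
  have part1 : 𝓛 ℓ = Submodule.span ℤ (Set.range b) := by
    rw [hLdef ℓ le_rfl]
    have hv0 : v (ℓ - ℓ) = b := by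
      funext s
      simp [hv, eexp, Nat.sub_self]
    rw [hv0]
  refine ⟨part1, ?_⟩
  intro i hi1 hiℓ
  have hj1 : ℓ - (i - 1) = (ℓ - i) + 1 := by omega
  set j := ℓ - i with hj
  have hL1 : 𝓛 i = Submodule.span ℤ (Set.range (v j)) := hLdef i hiℓ
  have hL2 : 𝓛 (i - 1) = Submodule.span ℤ (Set.range (v (j + 1))) := by
    rw [hLdef (i - 1) (by omega), hj1]
  have hmul1 : (j + 1) * α = j * α + α := by rw [Nat.succ_mul]
  have hcondA : ∀ s : Fin n, 0 + eexp n ((j + 1) * α) (s : ℕ) ≤ 1 + eexp n (j * α) (s : ℕ) := by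
    intro s
    have h1 : eexp n ((j + 1) * α) (s : ℕ) ≤ eexp n (j * α + n) (s : ℕ) :=
      eexp_mono hn (s : ℕ) (by omega)
    rw [eexp_add_n hn] at h1
    omega
  have hstepA : ∀ x ∈ 𝓛 (i - 1), (2 : ℝ) • x ∈ 𝓛 i := by
    intro x hx
    rw [hL1]
    rw [hL2] at hx
    have := hkey 1 0 j (j + 1) hcondA x hx
    simpa using this
  have hcondB : ∀ s : Fin n, 0 + eexp n (j * α) (s : ℕ) ≤ 0 + eexp n ((j + 1) * α) (s : ℕ) := by
    intro s
    have h1 : eexp n (j * α) (s : ℕ) ≤ eexp n ((j + 1) * α) (s : ℕ) :=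
      eexp_mono hn (s : ℕ) (by omega)
    omega
  have hstepB : 𝓛 i ≤ 𝓛 (i - 1) := by
    rw [hL1, hL2]
    intro x hx
    have := hkey 0 0 (j + 1) j hcondB x hx
    simpa using this
  -- strict inclusion
  have hlt : ∃ s : Fin n, eexp n (j * α) (s : ℕ) < eexp n ((j + 1) * α) (s : ℕ) := by
    by_contra hcon
    push_neg at hcon
    have hle2 : (j + 1) * α ≤ j * α := by
      calc (j + 1) * α = ∑ s : Fin n, eexp n ((j + 1) * α) (s : ℕ) := (sum_eexp hn _).symm
        _ ≤ ∑ s : Fin n, eexp n (j * α) (s : ℕ) := Finset.sum_le_sum (fun s _ => hcon s)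
        _ = j * α := sum_eexp hn _
    omega
  obtain ⟨s₀, hs₀⟩ := hlt
  have hstepC : 𝓛 i ≠ 𝓛 (i - 1) := by
    intro hEq
    have hmem : v (j + 1) s₀ ∈ 𝓛 i := by
      rw [hEq, hL2]
      exact Submodule.subset_span ⟨s₀, rfl⟩
    rw [hL1, Submodule.mem_span_range_iff_exists_fun ℤ] at hmem
    obtain ⟨c, hcsum⟩ := hmem
    have h1 : ∑ s, ((c s : ℝ) * ((2 : ℝ) ^ eexp n (j * α) (s : ℕ))⁻¹) • b s
        = ∑ s, (if s = s₀ then ((2 : ℝ) ^ eexp n ((j + 1) * α) (s₀ : ℕ))⁻¹ else 0) • b s := by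
      rw [show ∑ s, (if s = s₀ then ((2 : ℝ) ^ eexp n ((j + 1) * α) (s₀ : ℕ))⁻¹ else 0) • b s
          = v (j + 1) s₀ by simp [ite_smul, hv]]
      rw [← hcsum]
      refine Finset.sum_congr rfl (fun s _ => ?_)
      rw [hv, mul_smul, Int.cast_smul_eq_zsmul]
    have h2 := hcoefR _ _ h1 s₀
    simp only [if_pos rfl, if_true] at h2
    set a1 := eexp n (j * α) (s₀ : ℕ)
    set a2 := eexp n ((j + 1) * α) (s₀ : ℕ)
    have h3 : (c s₀ : ℝ) * (2 : ℝ) ^ a2 = (2 : ℝ) ^ a1 := by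
      have h2' := h2
      field_simp at h2'
      linarith [h2']
    have hpos1 : (0 : ℝ) < 2 ^ a1 := by positivity
    have hpos2 : (0 : ℝ) < 2 ^ a2 := by positivity
    rcases le_or_gt (c s₀) 0 with hcle | hcgt
    · have : (c s₀ : ℝ) * (2 : ℝ) ^ a2 ≤ 0 :=
        mul_nonpos_of_nonpos_of_nonneg (by exact_mod_cast hcle) (le_of_lt hpos2)
      linarith
    · have hc1 : (1 : ℝ) ≤ (c s₀ : ℝ) := by exact_mod_cast hcgt
      have hlt2 : (2 : ℝ) ^ a1 < (2 : ℝ) ^ a2 :=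
        pow_lt_pow_right₀ (by norm_num) hs₀
      nlinarith
  -- index computation
  have hstepD : Nat.card
      (↥(𝓛 (i - 1)) ⧸ Submodule.comap (𝓛 (i - 1)).subtype (𝓛 i)) = 2 ^ α := by
    rw [hL1, hL2]
    set w : Fin n → Euc n := v (j + 1) with hw
    set δ : Fin n → ℕ := fun s => eexp n ((j + 1) * α) (s : ℕ) - eexp n (j * α) (s : ℕ) with hδ
    have hδeq : ∀ s : Fin n, eexp n ((j + 1) * α) (s : ℕ) = eexp n (j * α) (s : ℕ) + δ s := by
      intro s
      have h1 : eexp n (j * α) (s : ℕ) ≤ eexp n ((j + 1) * α) (s : ℕ) :=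
        eexp_mono hn (s : ℕ) (by omega)
      simp only [hδ]
      omega
    have hsumδ : ∑ s : Fin n, δ s = α := by
      have h1 := sum_eexp hn ((j + 1) * α)
      have h2 := sum_eexp hn (j * α)
      have h3 : ∑ s : Fin n, eexp n ((j + 1) * α) (s : ℕ)
          = ∑ s : Fin n, (eexp n (j * α) (s : ℕ) + δ s) :=
        Finset.sum_congr rfl (fun s _ => hδeq s)
      rw [Finset.sum_add_distrib] at h3
      omega
    set d : Fin n → ℕ := fun s => 2 ^ δ s with hd
    have hdpos : ∀ s, 0 < d s := fun s => Nat.pow_pos (by norm_num)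
    have hdvw : ∀ s : Fin n, ((d s : ℤ)) • w s = v j s := by
      intro s
      rw [← Int.cast_smul_eq_zsmul ℝ, hw, hv]
      show ((d s : ℤ) : ℝ) • (((2 : ℝ) ^ eexp n ((j + 1) * α) (s : ℕ))⁻¹ • b s) = _
      rw [smul_smul]
      congr 1
      rw [hδeq s, hd]
      push_cast
      rw [pow_add]
      have : (0:ℝ) < 2 ^ eexp n (j * α) (s : ℕ) := by positivity
      have : (0:ℝ) < 2 ^ δ s := by positivity
      field_simp
    have hwliR : LinearIndependent ℝ w := by
      have h := hb.units_smul (fun s =>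
        Units.mk0 (((2 : ℝ) ^ eexp n ((j + 1) * α) (s : ℕ))⁻¹) (by positivity))
      exact h
    have hwli : LinearIndependent ℤ w := by
      refine hwliR.restrict_scalars ?_
      intro x y hxy
      have : (x : ℝ) = (y : ℝ) := by simpa [zsmul_eq_mul] using hxy
      exact_mod_cast this
    have hcoefZ : ∀ (f g : Fin n → ℤ), ∑ s, f s • w s = ∑ s, g s • w s → ∀ s, f s = g s := by
      intro f g hfg s
      have h0 : ∑ s, (f - g) s • w s = 0 := by
        simp only [Pi.sub_apply, sub_smul, Finset.sum_sub_distrib, hfg, sub_self]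
      have := Fintype.linearIndependent_iff.1 hwli (f - g) h0 s
      simpa [sub_eq_zero] using this
    set P : Module.Basis (Fin n) ℤ ↥(Submodule.span ℤ (Set.range w)) := Module.Basis.span hwli with hP
    have hPapp : ∀ s, (P s : Euc n) = w s := fun s => congrArg Subtype.val (Module.Basis.span_apply hwli s)
    have hNZ : ∀ s : Fin n, NeZero (d s) := fun s => ⟨Nat.pos_iff_ne_zero.mp (hdpos s)⟩
    let F : ↥(Submodule.span ℤ (Set.range w)) →ₗ[ℤ] ((s : Fin n) → ZMod (d s)) :=
      LinearMap.pi (fun s => ((Int.castRingHom (ZMod (d s))).toAddMonoidHom.toIntLinearMap).comp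
        ((Finsupp.lapply s).comp P.repr.toLinearMap))
    have hFapp : ∀ x s, F x s = ((P.repr x s : ℤ) : ZMod (d s)) := fun x s => rfl
    have hFsurj : Function.Surjective F := by
      intro z
      refine ⟨∑ s, ((z s).val : ℤ) • P s, ?_⟩
      funext s
      rw [hFapp]
      have hrepr : P.repr (∑ t, ((z t).val : ℤ) • P t) s = ((z s).val : ℤ) := by
        rw [Module.Basis.repr_sum_self]
      rw [hrepr]
      have := hNZ s
      have h6 : ((z s).val : ZMod (d s)) = z s := ZMod.natCast_rightInverse (z s)
      exact_mod_cast h6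
    have hxdecomp : ∀ x : ↥(Submodule.span ℤ (Set.range w)),
        (x : Euc n) = ∑ s, P.repr x s • w s := by
      intro x
      conv_lhs => rw [← P.sum_repr x]
      rw [Submodule.coe_sum]
      refine Finset.sum_congr rfl (fun s _ => ?_)
      rw [SetLike.val_smul, hPapp]
    have hker : LinearMap.ker F
        = Submodule.comap (Submodule.span ℤ (Set.range w)).subtype
            (Submodule.span ℤ (Set.range (v j))) := by
      ext x
      simp only [LinearMap.mem_ker, Submodule.mem_comap, Submodule.subtype_apply]
      constructor
      · intro hx
        have hdvd : ∀ s, (d s : ℤ) ∣ P.repr x s := by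
          intro s
          have h7 := congrFun hx s
          rw [hFapp] at h7
          simp only [Pi.zero_apply] at h7
          rwa [ZMod.intCast_zmod_eq_zero_iff_dvd] at h7
        choose c hc using hdvd
        rw [hxdecomp x]
        refine Submodule.sum_mem _ (fun s _ => ?_)
        rw [hc s, mul_comm, mul_smul, hdvw s]
        exact Submodule.smul_mem _ _ (Submodule.subset_span ⟨s, rfl⟩)
      · intro hx
        obtain ⟨c, hc⟩ := (Submodule.mem_span_range_iff_exists_fun ℤ).1 hx
        have h5 : ∑ s, (c s * (d s : ℤ)) • w s = ∑ s, P.repr x s • w s := by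
          rw [← hxdecomp x, ← hc]
          refine Finset.sum_congr rfl (fun s _ => ?_)
          rw [mul_smul, hdvw s]
        have h6 := hcoefZ _ _ h5
        funext s
        rw [hFapp, ← h6 s]
        simp only [Pi.zero_apply]
        push_cast
        simp [ZMod.natCast_self]
    have hcard := Nat.card_congr (F.quotKerEquivOfSurjective hFsurj).toEquiv
    rw [hker] at hcard
    rw [hcard, Nat.card_pi]
    calc ∏ s : Fin n, Nat.card (ZMod (d s)) = ∏ s : Fin n, d s :=
        Finset.prod_congr rfl (fun s _ => Nat.card_zmod _)
      _ = ∏ s : Fin n, 2 ^ δ s := rfl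
      _ = 2 ^ (∑ s : Fin n, δ s) := Finset.prod_pow_eq_pow_sum _ _ _
      _ = 2 ^ α := by rw [hsumδ]
  -- part (e)
  have hstepE : 2 ≤ i → ∀ x ∈ 𝓛 i, (2 : ℝ)⁻¹ • x ∈ 𝓛 (i - 2) := by
    intro hi2 x hx
    have hL3 : 𝓛 (i - 2) = Submodule.span ℤ (Set.range (v (j + 2))) := by
      rw [hLdef (i - 2) (by omega), show ℓ - (i - 2) = j + 2 by omega]
    rw [hL3]
    rw [hL1] at hx
    have hcond : ∀ s : Fin n, 1 + eexp n (j * α) (s : ℕ) ≤ 0 + eexp n ((j + 2) * α) (s : ℕ) := by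
      intro s
      have h1 : eexp n (j * α + n) (s : ℕ) ≤ eexp n ((j + 2) * α) (s : ℕ) :=
        eexp_mono hn (s : ℕ) (by ring_nf; omega)
      rw [eexp_add_n hn] at h1
      omega
    have := hkey 0 1 (j + 2) j hcond x hx
    simpa using this
  -- part (f)
  have hL0 : 𝓛 0 = Submodule.span ℤ (Set.range (v ℓ)) := by
    rw [hLdef 0 (by omega), Nat.sub_zero]
  have hℓα : ℓ * α = j * α + i * α := by
    rw [hj, ← Nat.add_mul, Nat.sub_add_cancel hiℓ]
  have hstepF : ∀ x ∈ 𝓛 0, ((2 : ℝ) ^ ((i * α + n - 1) / n : ℕ)) • x ∈ 𝓛 i := by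
    intro x hx
    rw [hL1]
    rw [hL0] at hx
    set q : ℕ := (i * α + n - 1) / n with hq
    have hcond : ∀ s : Fin n, 0 + eexp n (ℓ * α) (s : ℕ) ≤ q + eexp n (j * α) (s : ℕ) := by
      intro s
      have h1 : eexp n (ℓ * α) (s : ℕ) ≤ eexp n (j * α + q * n) (s : ℕ) := by
        apply eexp_mono hn (s : ℕ)
        have h2 : i * α ≤ q * n := by rw [hq]; exact ceil_mul_le hn (i * α)
        omega
      rw [eexp_add_mul_n hn] at h1
      omega
    have := hkey q 0 j ℓ hcond x hx
    simpa using this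
  -- part (g)
  have hstepG : ∀ x ∈ 𝓛 i, ∃ y ∈ 𝓛 0, x = ((2 : ℝ) ^ (i * α / n : ℕ)) • y := by
    intro x hx
    rw [hL1] at hx
    set q : ℕ := i * α / n with hq
    have hcond : ∀ s : Fin n, q + eexp n (j * α) (s : ℕ) ≤ 0 + eexp n (ℓ * α) (s : ℕ) := by
      intro s
      have h1 : eexp n (j * α + q * n) (s : ℕ) ≤ eexp n (ℓ * α) (s : ℕ) := by
        apply eexp_mono hn (s : ℕ)
        have h2 : q * n ≤ i * α := by rw [hq]; exact Nat.div_mul_le_self (i * α) n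
        omega
      rw [eexp_add_mul_n hn] at h1
      omega
    have hmem := hkey 0 q ℓ j hcond x hx
    have hy : ((2 : ℝ) ^ q)⁻¹ • x ∈ 𝓛 0 := by
      rw [hL0]
      simpa using hmem
    have hxy : x = (2 : ℝ) ^ q • (((2 : ℝ) ^ q)⁻¹ • x) :=
      (smul_inv_smul₀ (pow_ne_zero q (two_ne_zero)) x).symm
    exact ⟨((2 : ℝ) ^ q)⁻¹ • x, hy, hxy⟩
  exact ⟨hstepA, hstepB, hstepC, hstepD, hstepE, hstepF, hstepG⟩
end
end
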